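/- arXiv:0902.1873 — 2 statements merged into one kernel-verified Lean document; each statement's English description precedes it below -/
import Mathlib

section
/- Let (u^n)_{n=0,…,M} be a discrete solution and (v^n)_{n=0,…,M} a discrete supersolution (for the same boundary data ū^n, ū̄^n). Then for every n∈{0,…,M}, ∑_{j=−N}^{N−1} ϕ_{i(j)} (u^n_{j+1/2}−v^n_{j+1/2})⁺ δx ≤ ∑_{j=−N}^{N−1} ϕ_{i(j)} (u^0_{j+1/2}−v^0_{j+1/2})⁺ δx. Symmetrically, if (w^n) is a discrete subsolution, then for every n∈{0,…,M}, ∑_{j=−N}^{N−1} ϕ_{i(j)} (u^n_{j+1/2}−w^n_{j+1/2})⁻ δx ≤ ∑_{j=−N}^{N−1} ϕ_{i(j)} (u^0_{j+1/2}−w^0_{j+1/2})⁻ δx, where s⁺=max(s,0) and s⁻=max(−s,0). -/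
open Set

noncomputable section

/-- The monotone graph `π̃` associated to an increasing capillary pressure function `π`. -/
def tildePi (π : ℝ → ℝ) (s : ℝ) : Set ℝ :=
  if s = 0 then Set.Iic (π 0) else if s = 1 then Set.Ici (π 1) else {π s}

/-- The connection condition `π̃₁(c) ∩ π̃₂(d) ≠ ∅`. -/
def Connects (π₁ π₂ : ℝ → ℝ) (c d : ℝ) : Prop :=
  (tildePi π₁ c ∩ tildePi π₂ d).Nonempty

/-- The porosity `ϕ_{i(j)}` of the cell `(x_j, x_{j+1})` (indexed by `j`, representing the
unknown `u_{j+1/2}`): `ϕ₁` if `j < 0` (cell in `Ω₁`), `ϕ₂` if `j ≥ 0` (cell in `Ω₂`). -/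
def phiCoef (ϕ₁ ϕ₂ : ℝ) (j : ℤ) : ℝ := if j < 0 then ϕ₁ else ϕ₂

/-- The numerical flux `F_j[v]` through `x_j`, for a vector `v` (where `v j` stands for
`v_{j+1/2}`), with boundary data `ub = ū`, `uB = ū̄` and interface function `c`. -/
def numFlux (G₁ G₂ : ℝ → ℝ → ℝ) (φ₁ φ₂ : ℝ → ℝ) (c : ℝ → ℝ → ℝ) (δx : ℝ) (N : ℤ)
    (ub uB : ℝ) (v : ℤ → ℝ) (j : ℤ) : ℝ :=
  if j = -N then G₁ ub (v (-N))
  else if j = N then G₂ (v (N - 1)) uB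
  else if j < 0 then G₁ (v (j - 1)) (v j) - (φ₁ (v j) - φ₁ (v (j - 1))) / δx
  else if j = 0 then
    G₁ (v (-1)) (c (v (-1)) (v 0)) - 2 * (φ₁ (c (v (-1)) (v 0)) - φ₁ (v (-1))) / δx
  else G₂ (v (j - 1)) (v j) - (φ₂ (v j) - φ₂ (v (j - 1))) / δx

/-- The left-hand side of the implicit finite volume scheme at time step `n → n+1`,
cell `j`. -/
def schemeLHS (G₁ G₂ : ℝ → ℝ → ℝ) (φ₁ φ₂ : ℝ → ℝ) (c : ℝ → ℝ → ℝ)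
    (ϕ₁ ϕ₂ δx δt : ℝ) (N : ℤ) (ubar ubbar : ℕ → ℝ) (u : ℕ → ℤ → ℝ)
    (n : ℕ) (j : ℤ) : ℝ :=
  phiCoef ϕ₁ ϕ₂ j * (u (n + 1) j - u n j) * δx / δt
    + numFlux G₁ G₂ φ₁ φ₂ c δx N (ubar (n + 1)) (ubbar (n + 1)) (u (n + 1)) (j + 1)
    - numFlux G₁ G₂ φ₁ φ₂ c δx N (ubar (n + 1)) (ubbar (n + 1)) (u (n + 1)) j

/-- `u` takes values in `[0,1]` on the computational cells up to time level `M`. -/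
def InRange (N : ℤ) (M : ℕ) (u : ℕ → ℤ → ℝ) : Prop :=
  ∀ n ≤ M, ∀ j ∈ Finset.Icc (-N) (N - 1), u n j ∈ Set.Icc (0 : ℝ) 1

/-- `u` is a discrete solution of the implicit finite volume scheme. -/
def IsDiscreteSolution (G₁ G₂ : ℝ → ℝ → ℝ) (φ₁ φ₂ : ℝ → ℝ) (c : ℝ → ℝ → ℝ)
    (ϕ₁ ϕ₂ δx δt : ℝ) (N : ℤ) (M : ℕ) (ubar ubbar : ℕ → ℝ) (u : ℕ → ℤ → ℝ) : Prop :=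
  InRange N M u ∧ ∀ n < M, ∀ j ∈ Finset.Icc (-N) (N - 1),
    schemeLHS G₁ G₂ φ₁ φ₂ c ϕ₁ ϕ₂ δx δt N ubar ubbar u n j = 0

/-- `u` is a discrete supersolution of the implicit finite volume scheme. -/
def IsDiscreteSupersolution (G₁ G₂ : ℝ → ℝ → ℝ) (φ₁ φ₂ : ℝ → ℝ) (c : ℝ → ℝ → ℝ)
    (ϕ₁ ϕ₂ δx δt : ℝ) (N : ℤ) (M : ℕ) (ubar ubbar : ℕ → ℝ) (u : ℕ → ℤ → ℝ) : Prop :=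
  InRange N M u ∧ ∀ n < M, ∀ j ∈ Finset.Icc (-N) (N - 1),
    0 ≤ schemeLHS G₁ G₂ φ₁ φ₂ c ϕ₁ ϕ₂ δx δt N ubar ubbar u n j

/-- `u` is a discrete subsolution of the implicit finite volume scheme. -/
def IsDiscreteSubsolution (G₁ G₂ : ℝ → ℝ → ℝ) (φ₁ φ₂ : ℝ → ℝ) (c : ℝ → ℝ → ℝ)
    (ϕ₁ ϕ₂ δx δt : ℝ) (N : ℤ) (M : ℕ) (ubar ubbar : ℕ → ℝ) (u : ℕ → ℤ → ℝ) : Prop :=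
  InRange N M u ∧ ∀ n < M, ∀ j ∈ Finset.Icc (-N) (N - 1),
    schemeLHS G₁ G₂ φ₁ φ₂ c ϕ₁ ϕ₂ δx δt N ubar ubbar u n j ≤ 0

/-!
The scheme is monotone: every numerical flux `F_j` is nondecreasing in its upstream unknown and
nonincreasing in its downstream one. For the interface flux this comes from the graph condition:
if the interface flux decreased while the data moved up, then `c` would have to increase and `d`
decrease, and two points of `π̃₁(c) ∩ π̃₂(d)` and `π̃₁(c') ∩ π̃₂(d')` would then be strictly ordered
both ways. Subtracting the two schemes and multiplying cell by cell by `𝟙[v < u]`, summation by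
parts turns the flux terms into a sum of interface terms of a fixed sign, which yields the
`L¹`-contraction of `(u - v)⁺` over one time step.
-/

theorem Finset.sum_Icc_mul_sub_eq {R : Type*} [CommRing R] (g D : ℤ → R) {a b : ℤ}
    (hab : a ≤ b + 1) :
    ∑ j ∈ Finset.Icc a b, g j * (D (j + 1) - D j)
      = g (b + 1) * D (b + 1) - g (a - 1) * D a
        - ∑ j ∈ Finset.Icc a (b + 1), (g j - g (j - 1)) * D j := by
  induction b, (show a - 1 ≤ b by omega) using Int.leInduction with
  | base =>
    rw [sub_add_cancel, Finset.Icc_self, Finset.sum_singleton,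
      Finset.Icc_eq_empty (by omega), Finset.sum_empty]
    ring
  | succ b hb ih =>
    rw [← Finset.insert_Icc_right_eq_Icc_add_one (by omega),
      Finset.sum_insert (by simp), ih (by omega),
      ← Finset.insert_Icc_right_eq_Icc_add_one (by omega : a ≤ b + 1 + 1),
      Finset.sum_insert (by simp), add_sub_cancel_right]
    ring

section MonotoneGraph

variable {π : ℝ → ℝ} {s p : ℝ}

theorem le_of_mem_tildePi (hs : s ≠ 1) (hp : p ∈ tildePi π s) : p ≤ π s := by
  unfold tildePi at hp
  split_ifs at hp <;> simp_all

theorem ge_of_mem_tildePi (hs : s ≠ 0) (hp : p ∈ tildePi π s) : π s ≤ p := by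
  unfold tildePi at hp
  split_ifs at hp <;> simp_all

theorem lt_of_mem_tildePi_of_lt (hπ : StrictMonoOn π (Icc 0 1)) {t q : ℝ}
    (hs : s ∈ Icc (0 : ℝ) 1) (ht : t ∈ Icc (0 : ℝ) 1) (hst : s < t)
    (hp : p ∈ tildePi π s) (hq : q ∈ tildePi π t) : p < q :=
  calc p ≤ π s := le_of_mem_tildePi (by linarith [ht.2]) hp
    _ < π t := hπ hs ht hst
    _ ≤ q := ge_of_mem_tildePi (by linarith [hs.1]) hq

end MonotoneGraph

theorem flux_le_of_le_of_ge {G : ℝ → ℝ → ℝ} {φ : ℝ → ℝ}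
    (hGmono : ∀ b ∈ Icc (0 : ℝ) 1, MonotoneOn (fun a => G a b) (Icc 0 1))
    (hGanti : ∀ a ∈ Icc (0 : ℝ) 1, AntitoneOn (fun b => G a b) (Icc 0 1))
    (hφ : MonotoneOn φ (Icc 0 1)) {κ : ℝ} (hκ : 0 ≤ κ) {a a' b b' : ℝ}
    (ha : a ∈ Icc (0 : ℝ) 1) (ha' : a' ∈ Icc (0 : ℝ) 1)
    (hb : b ∈ Icc (0 : ℝ) 1) (hb' : b' ∈ Icc (0 : ℝ) 1) (haa' : a ≤ a') (hb'b : b' ≤ b) :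
    G a b - κ * (φ b - φ a) ≤ G a' b' - κ * (φ b' - φ a') := by
  have hG : G a b ≤ G a' b' := (hGmono b hb ha ha' haa').trans (hGanti a' ha' hb' hb hb'b)
  have hφ' : φ b' - φ a' ≤ φ b - φ a := by linarith [hφ ha ha' haa', hφ hb' hb hb'b]
  linarith [mul_le_mul_of_nonneg_left hφ' hκ]

theorem interfaceFlux_le_of_le_of_ge {π₁ π₂ φ₁ φ₂ : ℝ → ℝ} {G₁ G₂ : ℝ → ℝ → ℝ} {δx : ℝ}
    (hδx : 0 ≤ δx) (hπ₁ : StrictMonoOn π₁ (Icc 0 1)) (hπ₂ : StrictMonoOn π₂ (Icc 0 1))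
    (hφ₁ : MonotoneOn φ₁ (Icc 0 1)) (hφ₂ : MonotoneOn φ₂ (Icc 0 1))
    (hG₁mono : ∀ b ∈ Icc (0 : ℝ) 1, MonotoneOn (fun a => G₁ a b) (Icc 0 1))
    (hG₁anti : ∀ a ∈ Icc (0 : ℝ) 1, AntitoneOn (fun b => G₁ a b) (Icc 0 1))
    (hG₂mono : ∀ b ∈ Icc (0 : ℝ) 1, MonotoneOn (fun a => G₂ a b) (Icc 0 1))
    (hG₂anti : ∀ a ∈ Icc (0 : ℝ) 1, AntitoneOn (fun b => G₂ a b) (Icc 0 1))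
    {c d : ℝ → ℝ → ℝ}
    (hcd : ∀ a ∈ Icc (0 : ℝ) 1, ∀ b ∈ Icc (0 : ℝ) 1,
      c a b ∈ Icc (0 : ℝ) 1 ∧ d a b ∈ Icc (0 : ℝ) 1 ∧
        G₁ a (c a b) - 2 * (φ₁ (c a b) - φ₁ a) / δx
          = G₂ (d a b) b - 2 * (φ₂ b - φ₂ (d a b)) / δx ∧
        Connects π₁ π₂ (c a b) (d a b))
    {a a' b b' : ℝ} (ha : a ∈ Icc (0 : ℝ) 1) (ha' : a' ∈ Icc (0 : ℝ) 1)
    (hb : b ∈ Icc (0 : ℝ) 1) (hb' : b' ∈ Icc (0 : ℝ) 1) (haa' : a ≤ a') (hb'b : b' ≤ b) :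
    G₁ a (c a b) - 2 * (φ₁ (c a b) - φ₁ a) / δx
      ≤ G₁ a' (c a' b') - 2 * (φ₁ (c a' b') - φ₁ a') / δx := by
  obtain ⟨hc, hd, heq, p, hp₁, hp₂⟩ := hcd a ha b hb
  obtain ⟨hc', hd', heq', q, hq₁, hq₂⟩ := hcd a' ha' b' hb'
  by_contra! hlt
  simp only [mul_div_right_comm (2 : ℝ)] at heq heq' hlt
  have hκ : 0 ≤ 2 / δx := by positivity
  have hdd' : d a' b' < d a b := by
    by_contra! hle
    linarith [flux_le_of_le_of_ge hG₂mono hG₂anti hφ₂ hκ hd hd' hb hb' hle hb'b]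
  have hcc' : c a b < c a' b' := by
    by_contra! hle
    linarith [flux_le_of_le_of_ge hG₁mono hG₁anti hφ₁ hκ ha ha' hc hc' haa' hle]
  linarith [lt_of_mem_tildePi_of_lt hπ₁ hc hc' hcc' hp₁ hq₁,
    lt_of_mem_tildePi_of_lt hπ₂ hd' hd hdd' hq₂ hp₂]

/-- Interface `j ∈ [-N, N]` lies between cells `j - 1` and `j`; the boundary interfaces `±N`
have a single neighbouring cell among `[-N, N - 1]`. -/
def FluxMonotone (F : (ℤ → ℝ) → ℤ → ℝ) (N : ℤ) : Prop :=
  ∀ A B : ℤ → ℝ, (∀ k ∈ Finset.Icc (-N) (N - 1), A k ∈ Icc (0 : ℝ) 1) →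
    (∀ k ∈ Finset.Icc (-N) (N - 1), B k ∈ Icc (0 : ℝ) 1) →
    ∀ j ∈ Finset.Icc (-N) N, (-N < j → A (j - 1) ≤ B (j - 1)) → (j < N → B j ≤ A j) →
      F A j ≤ F B j

theorem numFlux_fluxMonotone {π₁ π₂ φ₁ φ₂ : ℝ → ℝ} {G₁ G₂ : ℝ → ℝ → ℝ} {δx : ℝ}
    (hδx : 0 ≤ δx) (hπ₁ : StrictMonoOn π₁ (Icc 0 1)) (hπ₂ : StrictMonoOn π₂ (Icc 0 1))
    (hφ₁ : MonotoneOn φ₁ (Icc 0 1)) (hφ₂ : MonotoneOn φ₂ (Icc 0 1))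
    (hG₁mono : ∀ b ∈ Icc (0 : ℝ) 1, MonotoneOn (fun a => G₁ a b) (Icc 0 1))
    (hG₁anti : ∀ a ∈ Icc (0 : ℝ) 1, AntitoneOn (fun b => G₁ a b) (Icc 0 1))
    (hG₂mono : ∀ b ∈ Icc (0 : ℝ) 1, MonotoneOn (fun a => G₂ a b) (Icc 0 1))
    (hG₂anti : ∀ a ∈ Icc (0 : ℝ) 1, AntitoneOn (fun b => G₂ a b) (Icc 0 1))
    {c d : ℝ → ℝ → ℝ}
    (hcd : ∀ a ∈ Icc (0 : ℝ) 1, ∀ b ∈ Icc (0 : ℝ) 1,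
      c a b ∈ Icc (0 : ℝ) 1 ∧ d a b ∈ Icc (0 : ℝ) 1 ∧
        G₁ a (c a b) - 2 * (φ₁ (c a b) - φ₁ a) / δx
          = G₂ (d a b) b - 2 * (φ₂ b - φ₂ (d a b)) / δx ∧
        Connects π₁ π₂ (c a b) (d a b))
    {N : ℤ} (hN : 1 ≤ N) {ub uB : ℝ} (hub : ub ∈ Icc (0 : ℝ) 1) (huB : uB ∈ Icc (0 : ℝ) 1) :
    FluxMonotone (numFlux G₁ G₂ φ₁ φ₂ c δx N ub uB) N := by
  intro A B hA hB j hj hup hdown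
  rw [Finset.mem_Icc] at hj
  have hκ : 0 ≤ δx⁻¹ := inv_nonneg.mpr hδx
  have mem : ∀ {k}, -N ≤ k → k ≤ N - 1 → k ∈ Finset.Icc (-N) (N - 1) := fun h₁ h₂ =>
    Finset.mem_Icc.mpr ⟨h₁, h₂⟩
  unfold numFlux
  split_ifs with hl hr hneg hzero
  · subst hl
    exact hG₁anti ub hub (hB _ (mem le_rfl (by omega))) (hA _ (mem le_rfl (by omega)))
      (hdown (by omega))
  · subst hr
    exact hG₂mono uB huB (hA _ (mem (by omega) le_rfl)) (hB _ (mem (by omega) le_rfl))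
      (hup (by omega))
  · simp only [div_eq_inv_mul]
    exact flux_le_of_le_of_ge hG₁mono hG₁anti hφ₁ hκ (hA _ (mem (by omega) (by omega)))
      (hB _ (mem (by omega) (by omega))) (hA _ (mem (by omega) (by omega)))
      (hB _ (mem (by omega) (by omega))) (hup (by omega)) (hdown (by omega))
  · subst hzero
    exact interfaceFlux_le_of_le_of_ge hδx hπ₁ hπ₂ hφ₁ hφ₂ hG₁mono hG₁anti hG₂mono hG₂anti hcd
      (hA _ (mem (by omega) (by omega))) (hB _ (mem (by omega) (by omega)))
      (hA _ (mem (by omega) (by omega))) (hB _ (mem (by omega) (by omega)))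
      (hup (by omega)) (hdown (by omega))
  · simp only [div_eq_inv_mul]
    exact flux_le_of_le_of_ge hG₂mono hG₂anti hφ₂ hκ (hA _ (mem (by omega) (by omega)))
      (hB _ (mem (by omega) (by omega))) (hA _ (mem (by omega) (by omega)))
      (hB _ (mem (by omega) (by omega))) (hup (by omega)) (hdown (by omega))

def signPosOnCells (N : ℤ) (A B : ℤ → ℝ) (k : ℤ) : ℝ :=
  if k ∈ Finset.Icc (-N) (N - 1) ∧ B k < A k then 1 else 0

namespace FluxMonotone

variable {F : (ℤ → ℝ) → ℤ → ℝ} {N : ℤ}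

theorem signPosOnCells_sub_mul_nonneg (hF : FluxMonotone F N) {A B : ℤ → ℝ}
    (hA : ∀ k ∈ Finset.Icc (-N) (N - 1), A k ∈ Icc (0 : ℝ) 1)
    (hB : ∀ k ∈ Finset.Icc (-N) (N - 1), B k ∈ Icc (0 : ℝ) 1)
    {j : ℤ} (hj : j ∈ Finset.Icc (-N) N) :
    0 ≤ (signPosOnCells N A B (j - 1) - signPosOnCells N A B j) * (F A j - F B j) := by
  have hj' := Finset.mem_Icc.mp hj
  unfold signPosOnCells
  split_ifs with hprev hcur hcur
  · simp
  · rw [sub_zero, one_mul, sub_nonneg]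
    refine hF B A hB hA j hj (fun _ => hprev.2.le) fun hjN => not_lt.mp fun hlt => hcur ?_
    exact ⟨Finset.mem_Icc.mpr ⟨by linarith [Finset.mem_Icc.mp hprev.1], by omega⟩, hlt⟩
  · rw [zero_sub, neg_one_mul, neg_nonneg, sub_nonpos]
    refine hF A B hA hB j hj (fun hjN => not_lt.mp fun hlt => hprev ?_) fun _ => hcur.2.le
    exact ⟨Finset.mem_Icc.mpr ⟨by omega, by linarith [Finset.mem_Icc.mp hcur.1]⟩, hlt⟩
  · simp

theorem sum_mul_posPart_le {p : ℤ → ℝ} (hF : FluxMonotone F N) (hN : 0 ≤ N)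
    (hp : ∀ j, 0 ≤ p j) {δx δt : ℝ} (hδx : 0 ≤ δx) (hδt : 0 < δt) {u₀ v₀ u₁ v₁ : ℤ → ℝ}
    (hu₁ : ∀ k ∈ Finset.Icc (-N) (N - 1), u₁ k ∈ Icc (0 : ℝ) 1)
    (hv₁ : ∀ k ∈ Finset.Icc (-N) (N - 1), v₁ k ∈ Icc (0 : ℝ) 1)
    (hscheme : ∀ j ∈ Finset.Icc (-N) (N - 1),
      p j * (u₁ j - u₀ j) * δx / δt + F u₁ (j + 1) - F u₁ j
        ≤ p j * (v₁ j - v₀ j) * δx / δt + F v₁ (j + 1) - F v₁ j) :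
    ∑ j ∈ Finset.Icc (-N) (N - 1), p j * max (u₁ j - v₁ j) 0 * δx
      ≤ ∑ j ∈ Finset.Icc (-N) (N - 1), p j * max (u₀ j - v₀ j) 0 * δx := by
  set χ := signPosOnCells N u₁ v₁
  set D := fun j => F u₁ j - F v₁ j
  have hcell : ∀ j ∈ Finset.Icc (-N) (N - 1),
      p j * max (u₁ j - v₁ j) 0 * δx
        ≤ p j * max (u₀ j - v₀ j) 0 * δx - δt * (χ j * (D (j + 1) - D j)) := by
    intro j hj
    have hmax : p j * (u₀ j - v₀ j) * δx ≤ p j * max (u₀ j - v₀ j) 0 * δx := by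
      gcongr
      · exact hp j
      · exact le_max_left _ _
    by_cases hlt : v₁ j < u₁ j
    · have hstep : p j * (u₁ j - v₁ j) * δx + δt * (D (j + 1) - D j)
          - p j * (u₀ j - v₀ j) * δx
          = δt * (p j * (u₁ j - u₀ j) * δx / δt + F u₁ (j + 1) - F u₁ j
            - (p j * (v₁ j - v₀ j) * δx / δt + F v₁ (j + 1) - F v₁ j)) := by
        field_simp
        ring
      have := mul_nonpos_of_nonneg_of_nonpos hδt.le (sub_nonpos.mpr (hscheme j hj))
      simp only [χ, signPosOnCells, if_pos (And.intro hj hlt), one_mul,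
        max_eq_left (sub_nonneg.mpr hlt.le)]
      linarith
    · simp only [χ, signPosOnCells, hlt, and_false, if_false, zero_mul, mul_zero, sub_zero,
        max_eq_right (sub_nonpos.mpr (not_lt.mp hlt))]
      exact mul_nonneg (mul_nonneg (hp j) (le_max_right _ _)) hδx
  have hχ_out : χ (-N - 1) = 0 ∧ χ (N - 1 + 1) = 0 := by
    simp only [χ, signPosOnCells, Finset.mem_Icc]
    constructor <;> (rw [if_neg]; omega)
  have hflux : 0 ≤ ∑ j ∈ Finset.Icc (-N) (N - 1), χ j * (D (j + 1) - D j) := by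
    rw [Finset.sum_Icc_mul_sub_eq χ D (by omega), hχ_out.1, hχ_out.2, sub_add_cancel]
    rw [zero_mul, zero_mul, sub_zero, zero_sub, neg_nonneg]
    refine Finset.sum_nonpos fun j hj => ?_
    rw [← neg_sub (χ (j - 1)), neg_mul, neg_nonpos]
    exact hF.signPosOnCells_sub_mul_nonneg hu₁ hv₁ hj
  calc ∑ j ∈ Finset.Icc (-N) (N - 1), p j * max (u₁ j - v₁ j) 0 * δx
      ≤ ∑ j ∈ Finset.Icc (-N) (N - 1),
          (p j * max (u₀ j - v₀ j) 0 * δx - δt * (χ j * (D (j + 1) - D j))) :=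
        Finset.sum_le_sum hcell
    _ = ∑ j ∈ Finset.Icc (-N) (N - 1), p j * max (u₀ j - v₀ j) 0 * δx
          - δt * ∑ j ∈ Finset.Icc (-N) (N - 1), χ j * (D (j + 1) - D j) := by
        rw [Finset.sum_sub_distrib, Finset.mul_sum]
    _ ≤ _ := sub_le_self _ (mul_nonneg hδt.le hflux)

end FluxMonotone

theorem sum_mul_posPart_le_of_schemeLHS_le {G₁ G₂ : ℝ → ℝ → ℝ} {φ₁ φ₂ : ℝ → ℝ}
    {c : ℝ → ℝ → ℝ} {ϕ₁ ϕ₂ δx δt : ℝ} {N : ℤ} {M : ℕ} {ubar ubbar : ℕ → ℝ}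
    (hN : 0 ≤ N) (hδx : 0 ≤ δx) (hδt : 0 < δt) (hϕ : ∀ j, 0 ≤ phiCoef ϕ₁ ϕ₂ j)
    (hF : ∀ n, 1 ≤ n → n ≤ M → FluxMonotone (numFlux G₁ G₂ φ₁ φ₂ c δx N (ubar n) (ubbar n)) N)
    {u v : ℕ → ℤ → ℝ} (hu : InRange N M u) (hv : InRange N M v)
    (hle : ∀ n < M, ∀ j ∈ Finset.Icc (-N) (N - 1),
      schemeLHS G₁ G₂ φ₁ φ₂ c ϕ₁ ϕ₂ δx δt N ubar ubbar u n j
        ≤ schemeLHS G₁ G₂ φ₁ φ₂ c ϕ₁ ϕ₂ δx δt N ubar ubbar v n j) :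
    ∀ n ≤ M, ∑ j ∈ Finset.Icc (-N) (N - 1), phiCoef ϕ₁ ϕ₂ j * max (u n j - v n j) 0 * δx
      ≤ ∑ j ∈ Finset.Icc (-N) (N - 1), phiCoef ϕ₁ ϕ₂ j * max (u 0 j - v 0 j) 0 * δx := by
  intro n
  induction n with
  | zero => exact fun _ => le_rfl
  | succ k ih =>
    intro hk
    exact ((hF (k + 1) (by omega) hk).sum_mul_posPart_le hN hϕ hδx hδt (hu (k + 1) hk)
      (hv (k + 1) hk) (hle k (by omega))).trans (ih (by omega))
theorem stmt3_general
    (T : ℝ) (hT : 0 < T) (N M : ℕ) (hN : 0 < N) (hM : 0 < M)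
    (δx δt : ℝ) (hδxdef : δx = 1 / (N : ℝ)) (hδtdef : δt = T / (M : ℝ))
    (ϕ₁ ϕ₂ : ℝ) (hϕ₁ : ϕ₁ ∈ Ioo (0:ℝ) 1) (hϕ₂ : ϕ₂ ∈ Ioo (0:ℝ) 1)
    (π₁ π₂ φ₁ φ₂ : ℝ → ℝ) (G₁ G₂ : ℝ → ℝ → ℝ)
    (hπ₁mono : StrictMonoOn π₁ (Icc 0 1))
    (hπ₂mono : StrictMonoOn π₂ (Icc 0 1))
    (hφ₁mono : StrictMonoOn φ₁ (Icc 0 1))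
    (hφ₂mono : StrictMonoOn φ₂ (Icc 0 1))
    (hG₁mono : ∀ b ∈ Icc (0:ℝ) 1, MonotoneOn (fun a => G₁ a b) (Icc 0 1))
    (hG₁anti : ∀ a ∈ Icc (0:ℝ) 1, AntitoneOn (fun b => G₁ a b) (Icc 0 1))
    (hG₂mono : ∀ b ∈ Icc (0:ℝ) 1, MonotoneOn (fun a => G₂ a b) (Icc 0 1))
    (hG₂anti : ∀ a ∈ Icc (0:ℝ) 1, AntitoneOn (fun b => G₂ a b) (Icc 0 1))
    (c d : ℝ → ℝ → ℝ)
    (hcd : ∀ a ∈ Icc (0:ℝ) 1, ∀ b ∈ Icc (0:ℝ) 1,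
      (c a b ∈ Icc (0:ℝ) 1 ∧ d a b ∈ Icc (0:ℝ) 1 ∧
        G₁ a (c a b) - 2 * (φ₁ (c a b) - φ₁ a) / δx
          = G₂ (d a b) b - 2 * (φ₂ b - φ₂ (d a b)) / δx ∧
        Connects π₁ π₂ (c a b) (d a b)) ∧
      ∀ c' d' : ℝ, c' ∈ Icc (0:ℝ) 1 → d' ∈ Icc (0:ℝ) 1 →
        G₁ a c' - 2 * (φ₁ c' - φ₁ a) / δx = G₂ d' b - 2 * (φ₂ b - φ₂ d') / δx →
        Connects π₁ π₂ c' d' → c' = c a b ∧ d' = d a b)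
    (ubar ubbar : ℕ → ℝ)
    (hubar : ∀ n, 1 ≤ n → n ≤ M → ubar n ∈ Icc (0:ℝ) 1)
    (hubbar : ∀ n, 1 ≤ n → n ≤ M → ubbar n ∈ Icc (0:ℝ) 1)
    (u v : ℕ → ℤ → ℝ)
    (hu : IsDiscreteSolution G₁ G₂ φ₁ φ₂ c ϕ₁ ϕ₂ δx δt (N : ℤ) M ubar ubbar u) :
    (IsDiscreteSupersolution G₁ G₂ φ₁ φ₂ c ϕ₁ ϕ₂ δx δt (N : ℤ) M ubar ubbar v →
      ∀ n ≤ M,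
        ∑ j ∈ Finset.Icc (-(N : ℤ)) ((N : ℤ) - 1),
            phiCoef ϕ₁ ϕ₂ j * max (u n j - v n j) 0 * δx
          ≤ ∑ j ∈ Finset.Icc (-(N : ℤ)) ((N : ℤ) - 1),
              phiCoef ϕ₁ ϕ₂ j * max (u 0 j - v 0 j) 0 * δx) ∧
    (IsDiscreteSubsolution G₁ G₂ φ₁ φ₂ c ϕ₁ ϕ₂ δx δt (N : ℤ) M ubar ubbar v →
      ∀ n ≤ M,
        ∑ j ∈ Finset.Icc (-(N : ℤ)) ((N : ℤ) - 1),
            phiCoef ϕ₁ ϕ₂ j * max (-(u n j - v n j)) 0 * δx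
          ≤ ∑ j ∈ Finset.Icc (-(N : ℤ)) ((N : ℤ) - 1),
              phiCoef ϕ₁ ϕ₂ j * max (-(u 0 j - v 0 j)) 0 * δx) := by
  have hδx : 0 ≤ δx := hδxdef ▸ by positivity
  have hδt : 0 < δt := by
    have : (0 : ℝ) < M := by exact_mod_cast hM
    rw [hδtdef]
    positivity
  have hϕ : ∀ j, 0 ≤ phiCoef ϕ₁ ϕ₂ j := fun j => by
    unfold phiCoef
    split_ifs
    exacts [hϕ₁.1.le, hϕ₂.1.le]
  have hF : ∀ n, 1 ≤ n → n ≤ M →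
      FluxMonotone (numFlux G₁ G₂ φ₁ φ₂ c δx N (ubar n) (ubbar n)) N := fun n h₁ h₂ =>
    numFlux_fluxMonotone hδx hπ₁mono hπ₂mono hφ₁mono.monotoneOn hφ₂mono.monotoneOn
      hG₁mono hG₁anti hG₂mono hG₂anti (fun a ha b hb => (hcd a ha b hb).1)
      (by exact_mod_cast hN) (hubar n h₁ h₂) (hubbar n h₁ h₂)
  have hN₀ : (0 : ℤ) ≤ N := Int.natCast_nonneg N
  refine ⟨fun hv => ?_, fun hv => ?_⟩
  · exact sum_mul_posPart_le_of_schemeLHS_le hN₀ hδx hδt hϕ hF hu.1 hv.1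
      fun n hn j hj => (hu.2 n hn j hj).le.trans (hv.2 n hn j hj)
  · simp only [neg_sub]
    exact sum_mul_posPart_le_of_schemeLHS_le hN₀ hδx hδt hϕ hF hv.1 hu.1
      fun n hn j hj => (hv.2 n hn j hj).trans (hu.2 n hn j hj).ge

/-- Discrete comparison principle: a discrete solution is compared with any discrete
supersolution (positive parts) and with any discrete subsolution (negative parts). -/
theorem stmt3
    (T : ℝ) (hT : 0 < T) (N M : ℕ) (hN : 0 < N) (hM : 0 < M)
    (δx δt : ℝ) (hδxdef : δx = 1 / (N : ℝ)) (hδtdef : δt = T / (M : ℝ))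
    (ϕ₁ ϕ₂ : ℝ) (hϕ₁ : ϕ₁ ∈ Ioo (0:ℝ) 1) (hϕ₂ : ϕ₂ ∈ Ioo (0:ℝ) 1)
    (π₁ π₂ φ₁ φ₂ : ℝ → ℝ) (G₁ G₂ : ℝ → ℝ → ℝ)
    (hπ₁mono : StrictMonoOn π₁ (Icc 0 1)) (hπ₁lip : ∃ K, LipschitzOnWith K π₁ (Icc 0 1))
    (hπ₂mono : StrictMonoOn π₂ (Icc 0 1)) (hπ₂lip : ∃ K, LipschitzOnWith K π₂ (Icc 0 1))
    (hφ₁mono : StrictMonoOn φ₁ (Icc 0 1)) (hφ₁lip : ∃ K, LipschitzOnWith K φ₁ (Icc 0 1))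
    (hφ₁zero : φ₁ 0 = 0)
    (hφ₂mono : StrictMonoOn φ₂ (Icc 0 1)) (hφ₂lip : ∃ K, LipschitzOnWith K φ₂ (Icc 0 1))
    (hφ₂zero : φ₂ 0 = 0)
    (hG₁lip : ∃ K, LipschitzOnWith K (fun p : ℝ × ℝ => G₁ p.1 p.2) (Icc 0 1 ×ˢ Icc 0 1))
    (hG₁mono : ∀ b ∈ Icc (0:ℝ) 1, MonotoneOn (fun a => G₁ a b) (Icc 0 1))
    (hG₁anti : ∀ a ∈ Icc (0:ℝ) 1, AntitoneOn (fun b => G₁ a b) (Icc 0 1))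
    (hG₂lip : ∃ K, LipschitzOnWith K (fun p : ℝ × ℝ => G₂ p.1 p.2) (Icc 0 1 ×ˢ Icc 0 1))
    (hG₂mono : ∀ b ∈ Icc (0:ℝ) 1, MonotoneOn (fun a => G₂ a b) (Icc 0 1))
    (hG₂anti : ∀ a ∈ Icc (0:ℝ) 1, AntitoneOn (fun b => G₂ a b) (Icc 0 1))
    (c d : ℝ → ℝ → ℝ)
    (hcd : ∀ a ∈ Icc (0:ℝ) 1, ∀ b ∈ Icc (0:ℝ) 1,
      (c a b ∈ Icc (0:ℝ) 1 ∧ d a b ∈ Icc (0:ℝ) 1 ∧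
        G₁ a (c a b) - 2 * (φ₁ (c a b) - φ₁ a) / δx
          = G₂ (d a b) b - 2 * (φ₂ b - φ₂ (d a b)) / δx ∧
        Connects π₁ π₂ (c a b) (d a b)) ∧
      ∀ c' d' : ℝ, c' ∈ Icc (0:ℝ) 1 → d' ∈ Icc (0:ℝ) 1 →
        G₁ a c' - 2 * (φ₁ c' - φ₁ a) / δx = G₂ d' b - 2 * (φ₂ b - φ₂ d') / δx →
        Connects π₁ π₂ c' d' → c' = c a b ∧ d' = d a b)
    (ubar ubbar : ℕ → ℝ)
    (hubar : ∀ n, 1 ≤ n → n ≤ M → ubar n ∈ Icc (0:ℝ) 1)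
    (hubbar : ∀ n, 1 ≤ n → n ≤ M → ubbar n ∈ Icc (0:ℝ) 1)
    (u v : ℕ → ℤ → ℝ)
    (hu : IsDiscreteSolution G₁ G₂ φ₁ φ₂ c ϕ₁ ϕ₂ δx δt (N : ℤ) M ubar ubbar u) :
    (IsDiscreteSupersolution G₁ G₂ φ₁ φ₂ c ϕ₁ ϕ₂ δx δt (N : ℤ) M ubar ubbar v →
      ∀ n ≤ M,
        ∑ j ∈ Finset.Icc (-(N : ℤ)) ((N : ℤ) - 1),
            phiCoef ϕ₁ ϕ₂ j * max (u n j - v n j) 0 * δx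
          ≤ ∑ j ∈ Finset.Icc (-(N : ℤ)) ((N : ℤ) - 1),
              phiCoef ϕ₁ ϕ₂ j * max (u 0 j - v 0 j) 0 * δx) ∧
    (IsDiscreteSubsolution G₁ G₂ φ₁ φ₂ c ϕ₁ ϕ₂ δx δt (N : ℤ) M ubar ubbar v →
      ∀ n ≤ M,
        ∑ j ∈ Finset.Icc (-(N : ℤ)) ((N : ℤ) - 1),
            phiCoef ϕ₁ ϕ₂ j * max (-(u n j - v n j)) 0 * δx
          ≤ ∑ j ∈ Finset.Icc (-(N : ℤ)) ((N : ℤ) - 1),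
              phiCoef ϕ₁ ϕ₂ j * max (-(u 0 j - v 0 j)) 0 * δx) :=
  stmt3_general T hT N M hN hM δx δt hδxdef hδtdef ϕ₁ ϕ₂ hϕ₁ hϕ₂ π₁ π₂ φ₁ φ₂ G₁ G₂ hπ₁mono hπ₂mono
    hφ₁mono hφ₂mono hG₁mono hG₁anti hG₂mono hG₂anti c d hcd ubar ubbar hubar hubbar u v hu
end
end

section
/- For every initial vector u^0=(u^0_{j+1/2})_{j=−N}^{N−1}∈[0,1]^{2N} and every boundary data ū^n,ū̄^n∈[0,1], there exists a unique discrete solution (u^n)_{n=0,…,M} with values in [0,1]^{2N} starting from u^0. Moreover, if v^0∈[0,1]^{2N} is another initial vector and (v^n) the corresponding discrete solution, then the L¹-contraction principle holds: for every n∈{0,…,M} and for both choices of sign ±, ∑_{j=−N}^{N−1} ϕ_{i(j)} (u^n_{j+1/2}−v^n_{j+1/2})^± δx ≤ ∑_{j=−N}^{N−1} ϕ_{i(j)} (u^0_{j+1/2}−v^0_{j+1/2})^± δx, where s⁺=max(s,0) and s⁻=max(−s,0). -/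
/-!
The scheme is monotone: each numerical flux `F_j[v]` is nondecreasing in `v_{j-1/2}` and
nonincreasing in `v_{j+1/2}`. Away from the interface this is the monotonicity of `G_i` and of
`φ_i`; at the interface it follows from the monotonicity of the solution `(c, d)` of the
interface problem in `(a, b)`, which the strict monotonicity of `φ_i` and of the graphs `π̃_i`
forces. Treating the boundary data as ghost cells, all fluxes become two-point fluxes that are
monotone and Lipschitz on `[0,1]²`.

Monotonicity gives the `L¹`-contraction (Crandall–Tartar): comparing a solution `u` with
`max u v` cell by cell and summing, the fluxes telescope to boundary terms of the right sign.
Uniqueness follows. For existence at each time step, the constant states `0` and `1` are a sub-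
and a supersolution because `f_i(0) = 0` and `f_i(1) = q`; since the residual grows at most
linearly in its own cell, the relaxation `w ↦ proj_{[0,1]} (w - R(w) / Λ)` is monotone on
`[0,1]^ℤ`, and a fixed point given by Tarski's theorem is a solution.
-/

open Set

noncomputable section

open scoped unitInterval NNReal

lemma le_apply_of_mem_tildePi {π : ℝ → ℝ} {x p : ℝ} (hx : x ≠ 1) (hp : p ∈ tildePi π x) :
    p ≤ π x := by
  by_cases h0 : x = 0
  · subst h0; simpa [tildePi] using hp
  · simp only [tildePi, h0, hx, if_false, mem_singleton_iff] at hp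
    exact hp.le

lemma apply_le_of_mem_tildePi {π : ℝ → ℝ} {x p : ℝ} (hx : x ≠ 0) (hp : p ∈ tildePi π x) :
    π x ≤ p := by
  by_cases h1 : x = 1
  · subst h1; simpa [tildePi] using hp
  · simp only [tildePi, hx, h1, if_false, mem_singleton_iff] at hp
    exact hp.ge

lemma lt_of_mem_tildePi {π : ℝ → ℝ} (hπ : StrictMonoOn π I) {x y p p' : ℝ}
    (hx : x ∈ I) (hy : y ∈ I) (hxy : x < y) (hp : p ∈ tildePi π x) (hp' : p' ∈ tildePi π y) :
    p < p' :=
  calc p ≤ π x := le_apply_of_mem_tildePi (hxy.trans_le hy.2).ne hp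
    _ < π y := hπ hx hy hxy
    _ ≤ p' := apply_le_of_mem_tildePi (hx.1.trans_lt hxy).ne' hp'

lemma connects_zero_zero (π₁ π₂ : ℝ → ℝ) : Connects π₁ π₂ 0 0 :=
  ⟨min (π₁ 0) (π₂ 0), by simp [tildePi]⟩

lemma connects_one_one (π₁ π₂ : ℝ → ℝ) : Connects π₁ π₂ 1 1 :=
  ⟨max (π₁ 1) (π₂ 1), by simp [tildePi]⟩

lemma LipschitzOnWith.sub_le_mul {K : ℝ≥0} {f : ℝ → ℝ} {s : Set ℝ} (hf : LipschitzOnWith K f s)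
    {x y : ℝ} (hx : x ∈ s) (hy : y ∈ s) : f x - f y ≤ K * |x - y| := by
  simpa only [Real.dist_eq] using (le_abs_self _).trans (hf.dist_le_mul x hx y hy)

def twoPointFlux (G : ℝ → ℝ → ℝ) (φ : ℝ → ℝ) (h a b : ℝ) : ℝ :=
  G a b - (φ b - φ a) / h

structure IsMonotoneLipschitzFlux (L : ℝ≥0) (g : ℝ → ℝ → ℝ) : Prop where
  left : ∀ b ∈ I, ∀ a ∈ I, ∀ a' ∈ I, a ≤ a' → g a b ≤ g a' b ∧ g a' b ≤ g a b + L * (a' - a)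
  right : ∀ a ∈ I, ∀ b ∈ I, ∀ b' ∈ I, b ≤ b' → g a b' ≤ g a b ∧ g a b ≤ g a b' + L * (b' - b)

namespace IsMonotoneLipschitzFlux

variable {L L' : ℝ≥0} {g : ℝ → ℝ → ℝ}

lemma mono (hg : IsMonotoneLipschitzFlux L g) (hL : L ≤ L') : IsMonotoneLipschitzFlux L' g := by
  have hL' : (L : ℝ) ≤ L' := hL
  refine ⟨fun b hb a ha a' ha' haa => ?_, fun a ha b hb b' hb' hbb => ?_⟩
  · obtain ⟨h₁, h₂⟩ := hg.left b hb a ha a' ha' haa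
    exact ⟨h₁, h₂.trans (by gcongr)⟩
  · obtain ⟨h₁, h₂⟩ := hg.right a ha b hb b' hb' hbb
    exact ⟨h₁, h₂.trans (by gcongr)⟩

lemma monotoneOn_left (hg : IsMonotoneLipschitzFlux L g) {b : ℝ} (hb : b ∈ I) :
    MonotoneOn (fun a => g a b) I := fun a ha a' ha' haa => (hg.left b hb a ha a' ha' haa).1

lemma antitoneOn_right (hg : IsMonotoneLipschitzFlux L g) {a : ℝ} (ha : a ∈ I) :
    AntitoneOn (g a) I := fun b hb b' hb' hbb => (hg.right a ha b hb b' hb' hbb).1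

lemma apply_le_apply (hg : IsMonotoneLipschitzFlux L g) {a a' b b' : ℝ} (ha : a ∈ I)
    (ha' : a' ∈ I) (hb : b ∈ I) (hb' : b' ∈ I) (haa : a ≤ a') (hbb : b' ≤ b) : g a b ≤ g a' b' :=
  (hg.left b hb a ha a' ha' haa).1.trans (hg.right a' ha' b' hb' b hb hbb).1

end IsMonotoneLipschitzFlux

lemma isMonotoneLipschitzFlux_of_lipschitzOnWith {K : ℝ≥0} {G : ℝ → ℝ → ℝ}
    (hG : LipschitzOnWith K (fun p : ℝ × ℝ => G p.1 p.2) (I ×ˢ I))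
    (hGl : ∀ b ∈ I, MonotoneOn (fun a => G a b) I)
    (hGr : ∀ a ∈ I, AntitoneOn (fun b => G a b) I) :
    IsMonotoneLipschitzFlux K G := by
  have hl : ∀ b ∈ I, ∀ a ∈ I, ∀ a' ∈ I, a ≤ a' → G a' b - G a b ≤ K * (a' - a) :=
    fun b hb a ha a' ha' haa => by
      have h := hG.comp (LipschitzWith.prodMk_right b).lipschitzOnWith
        (fun x hx => ⟨hx, hb⟩ : MapsTo (fun x => (x, b)) I (I ×ˢ I))
      simpa [abs_of_nonneg (sub_nonneg.2 haa)] using h.sub_le_mul ha' ha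
  have hr : ∀ a ∈ I, ∀ b ∈ I, ∀ b' ∈ I, b ≤ b' → G a b - G a b' ≤ K * (b' - b) :=
    fun a ha b hb b' hb' hbb => by
      have h := hG.comp (LipschitzWith.prodMk_left a).lipschitzOnWith
        (fun x hx => ⟨ha, hx⟩ : MapsTo (Prod.mk a) I (I ×ˢ I))
      simpa [abs_sub_comm b, abs_of_nonneg (sub_nonneg.2 hbb)] using h.sub_le_mul hb hb'
  refine ⟨fun b hb a ha a' ha' haa => ⟨hGl b hb ha ha' haa, ?_⟩,
    fun a ha b hb b' hb' hbb => ⟨hGr a ha hb hb' hbb, ?_⟩⟩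
  · linarith [hl b hb a ha a' ha' haa]
  · linarith [hr a ha b hb b' hb' hbb]

section TwoPointFlux

variable {G : ℝ → ℝ → ℝ} {φ : ℝ → ℝ} {h : ℝ}

lemma twoPointFlux_sub_left (a a' b : ℝ) :
    twoPointFlux G φ h a' b - twoPointFlux G φ h a b = (G a' b - G a b) + (φ a' - φ a) / h := by
  unfold twoPointFlux; ring

lemma twoPointFlux_sub_right (a b b' : ℝ) :
    twoPointFlux G φ h a b - twoPointFlux G φ h a b' = (G a b - G a b') + (φ b' - φ b) / h := by
  unfold twoPointFlux; ring

lemma twoPointFlux_self (s : ℝ) : twoPointFlux G φ h s s = G s s := by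
  simp [twoPointFlux]

lemma twoPointFlux_half (δx a b : ℝ) :
    twoPointFlux G φ (δx / 2) a b = G a b - 2 * (φ b - φ a) / δx := by
  unfold twoPointFlux; ring

variable {K Kφ : ℝ≥0}

lemma IsMonotoneLipschitzFlux.strictMonoOn_twoPointFlux_left (hG : IsMonotoneLipschitzFlux K G)
    (hφ : StrictMonoOn φ I) (hh : 0 < h) {b : ℝ} (hb : b ∈ I) :
    StrictMonoOn (fun a => twoPointFlux G φ h a b) I := fun a ha a' ha' haa => by
  have hG' := (hG.left b hb a ha a' ha' haa.le).1
  have hφ' : 0 < (φ a' - φ a) / h := div_pos (sub_pos.2 (hφ ha ha' haa)) hh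
  linarith [twoPointFlux_sub_left (G := G) (φ := φ) (h := h) a a' b]

lemma IsMonotoneLipschitzFlux.strictAntiOn_twoPointFlux_right (hG : IsMonotoneLipschitzFlux K G)
    (hφ : StrictMonoOn φ I) (hh : 0 < h) {a : ℝ} (ha : a ∈ I) :
    StrictAntiOn (fun b => twoPointFlux G φ h a b) I := fun b hb b' hb' hbb => by
  have hG' := (hG.right a ha b hb b' hb' hbb.le).1
  have hφ' : 0 < (φ b' - φ b) / h := div_pos (sub_pos.2 (hφ hb hb' hbb)) hh
  linarith [twoPointFlux_sub_right (G := G) (φ := φ) (h := h) a b b']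

lemma IsMonotoneLipschitzFlux.twoPointFlux (hG : IsMonotoneLipschitzFlux K G)
    (hφ : MonotoneOn φ I) (hφL : LipschitzOnWith Kφ φ I) (hh : 0 < h) :
    IsMonotoneLipschitzFlux (K + Kφ / h.toNNReal) (twoPointFlux G φ h) := by
  have hL : ((K + Kφ / h.toNNReal : ℝ≥0) : ℝ) = K + Kφ / h := by
    push_cast [Real.coe_toNNReal _ hh.le]; rfl
  have hφd : ∀ x ∈ I, ∀ y ∈ I, x ≤ y →
      0 ≤ (φ y - φ x) / h ∧ (φ y - φ x) / h ≤ Kφ / h * (y - x) := fun x hx y hy hxy => by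
    refine ⟨div_nonneg (sub_nonneg.2 (hφ hx hy hxy)) hh.le, ?_⟩
    rw [div_mul_eq_mul_div, div_le_div_iff_of_pos_right hh]
    simpa [abs_of_nonneg (sub_nonneg.2 hxy)] using hφL.sub_le_mul hy hx
  refine ⟨fun b hb a ha a' ha' haa => ?_, fun a ha b hb b' hb' hbb => ?_⟩
  · obtain ⟨hG₁, hG₂⟩ := hG.left b hb a ha a' ha' haa
    obtain ⟨hφ₁, hφ₂⟩ := hφd a ha a' ha' haa
    have e := twoPointFlux_sub_left (G := G) (φ := φ) (h := h) a a' b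
    rw [hL]
    constructor <;> nlinarith
  · obtain ⟨hG₁, hG₂⟩ := hG.right a ha b hb b' hb' hbb
    obtain ⟨hφ₁, hφ₂⟩ := hφd b hb b' hb' hbb
    have e := twoPointFlux_sub_right (G := G) (φ := φ) (h := h) a b b'
    rw [hL]
    constructor <;> nlinarith

end TwoPointFlux

theorem interface_le_of_le {π₁ π₂ : ℝ → ℝ} {g₁ g₂ : ℝ → ℝ → ℝ}
    (hπ₁ : StrictMonoOn π₁ I) (hπ₂ : StrictMonoOn π₂ I)
    (hg₁ : ∀ c ∈ I, MonotoneOn (fun a => g₁ a c) I) (hg₁' : ∀ a ∈ I, StrictAntiOn (g₁ a) I)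
    (hg₂ : ∀ b ∈ I, StrictMonoOn (fun d => g₂ d b) I) (hg₂' : ∀ d ∈ I, AntitoneOn (g₂ d) I)
    {a a' b b' c c' d d' : ℝ} (ha : a ∈ I) (ha' : a' ∈ I) (hb : b ∈ I) (hb' : b' ∈ I)
    (hc : c ∈ I) (hc' : c' ∈ I) (hd : d ∈ I) (hd' : d' ∈ I) (haa : a ≤ a') (hbb : b ≤ b')
    (h : g₁ a c = g₂ d b) (h' : g₁ a' c' = g₂ d' b')
    (hcd : Connects π₁ π₂ c d) (hcd' : Connects π₁ π₂ c' d') : c ≤ c' ∧ d ≤ d' := by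
  obtain ⟨p, hp₁, hp₂⟩ := hcd
  obtain ⟨p', hp₁', hp₂'⟩ := hcd'
  constructor
  · by_contra! hcc
    have hpp : p' < p := lt_of_mem_tildePi hπ₁ hc' hc hcc hp₁' hp₁
    have hdd : d' ≤ d := not_lt.1 fun hdd =>
      (lt_of_mem_tildePi hπ₂ hd hd' hdd hp₂ hp₂').not_gt hpp
    exact lt_irrefl _ <| calc
      g₂ d' b' ≤ g₂ d b' := (hg₂ b' hb').monotoneOn hd' hd hdd
      _ ≤ g₂ d b := hg₂' d hd hb hb' hbb
      _ = g₁ a c := h.symm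
      _ < g₁ a c' := hg₁' a ha hc' hc hcc
      _ ≤ g₁ a' c' := hg₁ c' hc' ha ha' haa
      _ = g₂ d' b' := h'
  · by_contra! hdd
    have hpp : p' < p := lt_of_mem_tildePi hπ₂ hd' hd hdd hp₂' hp₂
    have hcc : c' ≤ c := not_lt.1 fun hcc =>
      (lt_of_mem_tildePi hπ₁ hc hc' hcc hp₁ hp₁').not_gt hpp
    exact lt_irrefl _ <| calc
      g₁ a c ≤ g₁ a' c := hg₁ c hc ha ha' haa
      _ ≤ g₁ a' c' := (hg₁' a' ha').antitoneOn hc' hc hcc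
      _ = g₂ d' b' := h'
      _ < g₂ d b' := hg₂ b' hb' hd' hd hdd
      _ ≤ g₂ d b := hg₂' d hd hb hb' hbb
      _ = g₁ a c := h.symm

lemma MonotoneOn.apply_le_apply_of_uncurry {α β γ : Type*} [Preorder α] [Preorder β] [Preorder γ]
    {f : α → β → γ} {s : Set α} {t : Set β} (hf : MonotoneOn (Function.uncurry f) (s ×ˢ t))
    {a a' : α} {b b' : β} (ha : a ∈ s) (ha' : a' ∈ s) (hb : b ∈ t) (hb' : b' ∈ t)
    (haa : a ≤ a') (hbb : b ≤ b') : f a b ≤ f a' b' :=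
  hf (a := (a, b)) (b := (a', b')) ⟨ha, hb⟩ ⟨ha', hb'⟩ ⟨haa, hbb⟩

/-- `F_0`: the two-point flux across the half cell `(x_{-1/2}, x_0)`, whose state at the
interface is `c(a, b)`. -/
def interfaceFlux (G₁ : ℝ → ℝ → ℝ) (φ₁ : ℝ → ℝ) (c : ℝ → ℝ → ℝ) (δx a b : ℝ) : ℝ :=
  twoPointFlux G₁ φ₁ (δx / 2) a (c a b)

theorem IsMonotoneLipschitzFlux.comp_interface {L : ℝ≥0} {g₁ g₂ c d : ℝ → ℝ → ℝ}
    (hg₁ : IsMonotoneLipschitzFlux L g₁) (hg₂ : IsMonotoneLipschitzFlux L g₂)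
    (hc : ∀ a ∈ I, ∀ b ∈ I, c a b ∈ I) (hd : ∀ a ∈ I, ∀ b ∈ I, d a b ∈ I)
    (hcm : MonotoneOn (Function.uncurry c) (I ×ˢ I))
    (hdm : MonotoneOn (Function.uncurry d) (I ×ˢ I))
    (heq : ∀ a ∈ I, ∀ b ∈ I, g₁ a (c a b) = g₂ (d a b) b) :
    IsMonotoneLipschitzFlux L (fun a b => g₁ a (c a b)) := by
  refine ⟨fun b hb a ha a' ha' haa => ⟨?_, ?_⟩, fun a ha b hb b' hb' hbb => ⟨?_, ?_⟩⟩
  · rw [heq a ha b hb, heq a' ha' b hb]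
    exact (hg₂.left b hb _ (hd a ha b hb) _ (hd a' ha' b hb)
      (hdm.apply_le_apply_of_uncurry ha ha' hb hb haa le_rfl)).1
  · calc g₁ a' (c a' b) ≤ g₁ a' (c a b) := (hg₁.right a' ha' _ (hc a ha b hb) _ (hc a' ha' b hb)
          (hcm.apply_le_apply_of_uncurry ha ha' hb hb haa le_rfl)).1
      _ ≤ g₁ a (c a b) + L * (a' - a) := (hg₁.left _ (hc a ha b hb) a ha a' ha' haa).2
  · exact (hg₁.right a ha _ (hc a ha b hb) _ (hc a ha b' hb')
      (hcm.apply_le_apply_of_uncurry ha ha hb hb' le_rfl hbb)).1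
  · calc g₁ a (c a b) = g₂ (d a b) b := heq a ha b hb
      _ ≤ g₂ (d a b') b := (hg₂.left b hb _ (hd a ha b hb) _ (hd a ha b' hb')
          (hdm.apply_le_apply_of_uncurry ha ha hb hb' le_rfl hbb)).1
      _ ≤ g₂ (d a b') b' + L * (b' - b) := (hg₂.right _ (hd a ha b' hb') b hb b' hb' hbb).2
      _ = g₁ a (c a b') + L * (b' - b) := by rw [heq a ha b' hb']

theorem monotoneOn_interface {π₁ π₂ : ℝ → ℝ} {g₁ g₂ c d : ℝ → ℝ → ℝ}
    (hπ₁ : StrictMonoOn π₁ I) (hπ₂ : StrictMonoOn π₂ I)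
    (hg₁ : ∀ c ∈ I, MonotoneOn (fun a => g₁ a c) I) (hg₁' : ∀ a ∈ I, StrictAntiOn (g₁ a) I)
    (hg₂ : ∀ b ∈ I, StrictMonoOn (fun d => g₂ d b) I) (hg₂' : ∀ d ∈ I, AntitoneOn (g₂ d) I)
    (hsol : ∀ a ∈ I, ∀ b ∈ I, c a b ∈ I ∧ d a b ∈ I ∧ g₁ a (c a b) = g₂ (d a b) b ∧
      Connects π₁ π₂ (c a b) (d a b)) :
    MonotoneOn (Function.uncurry c) (I ×ˢ I) ∧ MonotoneOn (Function.uncurry d) (I ×ˢ I) := by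
  have key : ∀ p ∈ I ×ˢ I, ∀ q ∈ I ×ˢ I, p ≤ q →
      Function.uncurry c p ≤ Function.uncurry c q ∧
        Function.uncurry d p ≤ Function.uncurry d q := by
    rintro ⟨a, b⟩ ⟨ha, hb⟩ ⟨a', b'⟩ ⟨ha', hb'⟩ ⟨haa, hbb⟩
    obtain ⟨hc, hd, h, hcd⟩ := hsol a ha b hb
    obtain ⟨hc', hd', h', hcd'⟩ := hsol a' ha' b' hb'
    exact interface_le_of_le hπ₁ hπ₂ hg₁ hg₁' hg₂ hg₂' ha ha' hb hb' hc hc' hd hd' haa hbb h h'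
      hcd hcd'
  exact ⟨fun p hp q hq hpq => (key p hp q hq hpq).1, fun p hp q hq hpq => (key p hp q hq hpq).2⟩

theorem exists_isMonotoneLipschitzFlux_interfaceFlux {π₁ π₂ φ₁ φ₂ : ℝ → ℝ}
    {G₁ G₂ c d : ℝ → ℝ → ℝ} {δx : ℝ} {K₁ K₂ Kφ₁ Kφ₂ : ℝ≥0} (hδx : 0 < δx)
    (hπ₁ : StrictMonoOn π₁ I) (hπ₂ : StrictMonoOn π₂ I)
    (hφ₁ : StrictMonoOn φ₁ I) (hφ₁L : LipschitzOnWith Kφ₁ φ₁ I)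
    (hφ₂ : StrictMonoOn φ₂ I) (hφ₂L : LipschitzOnWith Kφ₂ φ₂ I)
    (hG₁ : IsMonotoneLipschitzFlux K₁ G₁) (hG₂ : IsMonotoneLipschitzFlux K₂ G₂)
    (hcd : ∀ a ∈ I, ∀ b ∈ I, c a b ∈ I ∧ d a b ∈ I ∧
      G₁ a (c a b) - 2 * (φ₁ (c a b) - φ₁ a) / δx = G₂ (d a b) b - 2 * (φ₂ b - φ₂ (d a b)) / δx ∧
      Connects π₁ π₂ (c a b) (d a b)) :
    ∃ L, IsMonotoneLipschitzFlux L (interfaceFlux G₁ φ₁ c δx) := by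
  have hδx₂ : 0 < δx / 2 := half_pos hδx
  set B₁ := K₁ + Kφ₁ / (δx / 2).toNNReal
  set B₂ := K₂ + Kφ₂ / (δx / 2).toNNReal
  have h₁ := (hG₁.twoPointFlux hφ₁.monotoneOn hφ₁L hδx₂).mono (le_self_add : B₁ ≤ B₁ + B₂)
  have h₂ := (hG₂.twoPointFlux hφ₂.monotoneOn hφ₂L hδx₂).mono (le_add_self : B₂ ≤ B₁ + B₂)
  have hsol : ∀ a ∈ I, ∀ b ∈ I, c a b ∈ I ∧ d a b ∈ I ∧
      twoPointFlux G₁ φ₁ (δx / 2) a (c a b) = twoPointFlux G₂ φ₂ (δx / 2) (d a b) b ∧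
      Connects π₁ π₂ (c a b) (d a b) := by
    simpa only [twoPointFlux_half] using hcd
  obtain ⟨hcm, hdm⟩ := monotoneOn_interface hπ₁ hπ₂ (fun c hc => h₁.monotoneOn_left hc)
    (fun a ha => hG₁.strictAntiOn_twoPointFlux_right hφ₁ hδx₂ ha)
    (fun b hb => hG₂.strictMonoOn_twoPointFlux_left hφ₂ hδx₂ hb)
    (fun d hd => h₂.antitoneOn_right hd) hsol
  exact ⟨B₁ + B₂, h₁.comp_interface h₂ (fun a ha b hb => (hsol a ha b hb).1)
    (fun a ha b hb => (hsol a ha b hb).2.1) hcm hdm (fun a ha b hb => (hsol a ha b hb).2.2.1)⟩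

def edgeFlux (G₁ G₂ : ℝ → ℝ → ℝ) (φ₁ φ₂ : ℝ → ℝ) (c : ℝ → ℝ → ℝ) (δx : ℝ) (N j : ℤ) :
    ℝ → ℝ → ℝ :=
  if j = -N then G₁ else if j = N then G₂ else if j < 0 then twoPointFlux G₁ φ₁ δx
  else if j = 0 then interfaceFlux G₁ φ₁ c δx else twoPointFlux G₂ φ₂ δx

theorem exists_isMonotoneLipschitzFlux_edgeFlux {π₁ π₂ φ₁ φ₂ : ℝ → ℝ} {G₁ G₂ c d : ℝ → ℝ → ℝ}
    {δx : ℝ} (hδx : 0 < δx) (hπ₁ : StrictMonoOn π₁ I) (hπ₂ : StrictMonoOn π₂ I)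
    (hφ₁ : StrictMonoOn φ₁ I) (hφ₁L : ∃ K, LipschitzOnWith K φ₁ I)
    (hφ₂ : StrictMonoOn φ₂ I) (hφ₂L : ∃ K, LipschitzOnWith K φ₂ I)
    (hG₁L : ∃ K, LipschitzOnWith K (fun p : ℝ × ℝ => G₁ p.1 p.2) (I ×ˢ I))
    (hG₁ : ∀ b ∈ I, MonotoneOn (fun a => G₁ a b) I)
    (hG₁' : ∀ a ∈ I, AntitoneOn (fun b => G₁ a b) I)
    (hG₂L : ∃ K, LipschitzOnWith K (fun p : ℝ × ℝ => G₂ p.1 p.2) (I ×ˢ I))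
    (hG₂ : ∀ b ∈ I, MonotoneOn (fun a => G₂ a b) I)
    (hG₂' : ∀ a ∈ I, AntitoneOn (fun b => G₂ a b) I)
    (hcd : ∀ a ∈ I, ∀ b ∈ I, c a b ∈ I ∧ d a b ∈ I ∧
      G₁ a (c a b) - 2 * (φ₁ (c a b) - φ₁ a) / δx = G₂ (d a b) b - 2 * (φ₂ b - φ₂ (d a b)) / δx ∧
      Connects π₁ π₂ (c a b) (d a b)) (N : ℤ) :
    ∃ L, ∀ j, IsMonotoneLipschitzFlux L (edgeFlux G₁ G₂ φ₁ φ₂ c δx N j) := by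
  obtain ⟨K₁, hK₁⟩ := hG₁L
  obtain ⟨K₂, hK₂⟩ := hG₂L
  obtain ⟨Kφ₁, hKφ₁⟩ := hφ₁L
  obtain ⟨Kφ₂, hKφ₂⟩ := hφ₂L
  have hF₁ := isMonotoneLipschitzFlux_of_lipschitzOnWith hK₁ hG₁ hG₁'
  have hF₂ := isMonotoneLipschitzFlux_of_lipschitzOnWith hK₂ hG₂ hG₂'
  have ht₁ := hF₁.twoPointFlux hφ₁.monotoneOn hKφ₁ hδx
  have ht₂ := hF₂.twoPointFlux hφ₂.monotoneOn hKφ₂ hδx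
  obtain ⟨B, hB⟩ :=
    exists_isMonotoneLipschitzFlux_interfaceFlux hδx hπ₁ hπ₂ hφ₁ hKφ₁ hφ₂ hKφ₂ hF₁ hF₂ hcd
  refine ⟨K₁ + Kφ₁ / δx.toNNReal + (K₂ + Kφ₂ / δx.toNNReal) + B, fun j => ?_⟩
  unfold edgeFlux
  split_ifs
  · exact hF₁.mono (le_self_add.trans (le_self_add.trans le_self_add))
  · exact hF₂.mono (le_self_add.trans (le_add_self.trans le_self_add))
  · exact ht₁.mono (le_self_add.trans le_self_add)
  · exact hB.mono le_add_self
  · exact ht₂.mono (le_add_self.trans le_self_add)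

lemma edgeFlux_self {π₁ π₂ φ₁ φ₂ : ℝ → ℝ} {G₁ G₂ c d : ℝ → ℝ → ℝ} {δx s : ℝ} (hs : s ∈ I)
    (hG : G₁ s s = G₂ s s) (hcon : Connects π₁ π₂ s s)
    (huniq : ∀ c' d' : ℝ, c' ∈ I → d' ∈ I →
      G₁ s c' - 2 * (φ₁ c' - φ₁ s) / δx = G₂ d' s - 2 * (φ₂ s - φ₂ d') / δx →
      Connects π₁ π₂ c' d' → c' = c s s ∧ d' = d s s) (N j : ℤ) :
    edgeFlux G₁ G₂ φ₁ φ₂ c δx N j s s = G₁ s s := by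
  have hc : c s s = s := (huniq s s hs hs (by simp [hG]) hcon).1.symm
  unfold edgeFlux interfaceFlux
  split_ifs <;> simp [twoPointFlux_self, hc, hG]

/-- The boundary data act as ghost cells: `ub` left of `lo` and `uB` right of `hi`. With them,
`F_j[v]` is `edgeFlux j` evaluated at the two states adjacent to `x_j` (`numFlux_eq_edgeFlux`),
`v j` standing for `v_{j+1/2}`. -/
def ghostExtend (lo hi : ℤ) (ub uB : ℝ) (v : ℤ → ℝ) (k : ℤ) : ℝ :=
  if k < lo then ub else if hi < k then uB else v k

lemma numFlux_eq_edgeFlux {G₁ G₂ : ℝ → ℝ → ℝ} {φ₁ φ₂ : ℝ → ℝ} {c : ℝ → ℝ → ℝ} {δx : ℝ} {N : ℤ}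
    (hN : 0 < N) (ub uB : ℝ) (v : ℤ → ℝ) {j : ℤ} (hj : -N ≤ j) (hj' : j ≤ N) :
    numFlux G₁ G₂ φ₁ φ₂ c δx N ub uB v j =
      edgeFlux G₁ G₂ φ₁ φ₂ c δx N j (ghostExtend (-N) (N - 1) ub uB v (j - 1))
        (ghostExtend (-N) (N - 1) ub uB v j) := by
  unfold numFlux edgeFlux ghostExtend
  split_ifs <;>
    first | omega | (subst_vars; rfl) | (subst_vars; simp [interfaceFlux, twoPointFlux_half])

lemma sum_Icc_succ_sub {M : Type*} [AddCommGroup M] (f : ℤ → M) {lo hi : ℤ} (h : lo ≤ hi + 1) :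
    ∑ j ∈ Finset.Icc lo hi, (f (j + 1) - f j) = f (hi + 1) - f lo := by
  obtain ⟨n, rfl⟩ : ∃ n : ℕ, hi = lo + n - 1 := ⟨(hi + 1 - lo).toNat, by omega⟩
  induction n with
  | zero => simp
  | succ n ih =>
    rw [show lo + ((n + 1 : ℕ) : ℤ) - 1 = lo + n - 1 + 1 by push_cast; ring,
      ← Finset.insert_Icc_right_eq_Icc_add_one (by omega), Finset.sum_insert (by simp),
      ih (by omega)]
    abel

def IsUnitOn (lo hi : ℤ) (v : ℤ → ℝ) : Prop := ∀ k ∈ Finset.Icc lo hi, v k ∈ I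

lemma IsUnitOn.update {lo hi j : ℤ} {v : ℤ → ℝ} {s : ℝ} (hv : IsUnitOn lo hi v) (hs : s ∈ I) :
    IsUnitOn lo hi (Function.update v j s) := fun k hk => by
  by_cases hkj : k = j
  · subst hkj; simpa using hs
  · simpa [hkj] using hv k hk

/-- The interfaces `j ∈ [lo, hi + 1]` separate the cells `j - 1` and `j`. Besides monotonicity,
this says that `F v j` reads only `v (j - 1)` and `v j`, and only the inner cell at the two
boundary interfaces. -/
def IsMonotoneFlux (lo hi : ℤ) (F : (ℤ → ℝ) → ℤ → ℝ) : Prop :=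
  ∀ v w : ℤ → ℝ, IsUnitOn lo hi v → IsUnitOn lo hi w → ∀ j, lo ≤ j → j ≤ hi + 1 →
    (lo < j → v (j - 1) ≤ w (j - 1)) → (j ≤ hi → w j ≤ v j) → F v j ≤ F w j

def IsLipschitzFlux (lo hi : ℤ) (L : ℝ≥0) (F : (ℤ → ℝ) → ℤ → ℝ) : Prop :=
  ∀ v : ℤ → ℝ, IsUnitOn lo hi v → ∀ j ∈ Finset.Icc lo hi, ∀ s ∈ I, ∀ s' ∈ I, s ≤ s' →
    F (Function.update v j s') (j + 1) ≤ F (Function.update v j s) (j + 1) + L * (s' - s) ∧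
    F (Function.update v j s) j ≤ F (Function.update v j s') j + L * (s' - s)

section GhostCells

variable {lo hi : ℤ} {ub uB : ℝ} {v w : ℤ → ℝ}

lemma ghostExtend_mem (hub : ub ∈ I) (huB : uB ∈ I) (hv : IsUnitOn lo hi v) (k : ℤ) :
    ghostExtend lo hi ub uB v k ∈ I := by
  unfold ghostExtend
  split_ifs with h₁ h₂
  exacts [hub, huB, hv k (Finset.mem_Icc.2 ⟨not_lt.1 h₁, not_lt.1 h₂⟩)]

lemma ghostExtend_of_mem {k : ℤ} (hk : k ∈ Finset.Icc lo hi) :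
    ghostExtend lo hi ub uB v k = v k := by
  obtain ⟨h₁, h₂⟩ := Finset.mem_Icc.1 hk
  simp [ghostExtend, not_lt.2 h₁, not_lt.2 h₂]

lemma ghostExtend_le_ghostExtend {k : ℤ} (h : k ∈ Finset.Icc lo hi → v k ≤ w k) :
    ghostExtend lo hi ub uB v k ≤ ghostExtend lo hi ub uB w k := by
  unfold ghostExtend
  split_ifs with h₁ h₂
  exacts [le_rfl, le_rfl, h (Finset.mem_Icc.2 ⟨not_lt.1 h₁, not_lt.1 h₂⟩)]

lemma ghostExtend_update {j : ℤ} (hj : j ∈ Finset.Icc lo hi) (s : ℝ) :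
    ghostExtend lo hi ub uB (Function.update v j s) =
      Function.update (ghostExtend lo hi ub uB v) j s := by
  funext k
  by_cases hkj : k = j
  · subst hkj; simp [ghostExtend_of_mem hj]
  · simp only [ghostExtend, Function.update_of_ne hkj]

variable {L : ℝ≥0} {g : ℤ → ℝ → ℝ → ℝ} {F : (ℤ → ℝ) → ℤ → ℝ}

theorem isMonotoneFlux_of_ghostExtend (hg : ∀ j, IsMonotoneLipschitzFlux L (g j))
    (hub : ub ∈ I) (huB : uB ∈ I)
    (hF : ∀ v j, lo ≤ j → j ≤ hi + 1 →
      F v j = g j (ghostExtend lo hi ub uB v (j - 1)) (ghostExtend lo hi ub uB v j)) :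
    IsMonotoneFlux lo hi F := by
  intro v w hv hw j hj hj' hl hr
  rw [hF v j hj hj', hF w j hj hj']
  refine (hg j).apply_le_apply (ghostExtend_mem hub huB hv _) (ghostExtend_mem hub huB hw _)
    (ghostExtend_mem hub huB hv _) (ghostExtend_mem hub huB hw _) ?_ ?_
  · exact ghostExtend_le_ghostExtend fun hk => hl (by linarith [(Finset.mem_Icc.1 hk).1])
  · exact ghostExtend_le_ghostExtend fun hk => hr (Finset.mem_Icc.1 hk).2

theorem isLipschitzFlux_of_ghostExtend (hg : ∀ j, IsMonotoneLipschitzFlux L (g j))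
    (hub : ub ∈ I) (huB : uB ∈ I)
    (hF : ∀ v j, lo ≤ j → j ≤ hi + 1 →
      F v j = g j (ghostExtend lo hi ub uB v (j - 1)) (ghostExtend lo hi ub uB v j)) :
    IsLipschitzFlux lo hi L F := by
  intro v hv j hj s hs s' hs' hss
  obtain ⟨hj₁, hj₂⟩ := Finset.mem_Icc.1 hj
  have hv' := ghostExtend_mem hub huB hv
  simp only [hF _ (j + 1) (by omega) (by omega), hF _ j hj₁ (by omega), ghostExtend_update hj,
    add_sub_cancel_right, Function.update_self, Function.update_of_ne (by omega : j + 1 ≠ j),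
    Function.update_of_ne (by omega : j - 1 ≠ j)]
  exact ⟨((hg (j + 1)).left _ (hv' _) s hs s' hs' hss).2,
    ((hg j).right _ (hv' _) s hs s' hs' hss).2⟩

theorem flux_zero_succ_le_of_ghostExtend {C : ℝ} (hg : ∀ j, IsMonotoneLipschitzFlux L (g j))
    (hg₀ : ∀ j, g j 0 0 = C) (hub : ub ∈ I) (huB : uB ∈ I)
    (hF : ∀ v j, lo ≤ j → j ≤ hi + 1 →
      F v j = g j (ghostExtend lo hi ub uB v (j - 1)) (ghostExtend lo hi ub uB v j)) :
    ∀ j ∈ Finset.Icc lo hi, F 0 (j + 1) ≤ F 0 j := by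
  intro j hj
  obtain ⟨hj₁, hj₂⟩ := Finset.mem_Icc.1 hj
  have h₀ := ghostExtend_mem (lo := lo) (hi := hi) hub huB (fun _ _ => unitInterval.zero_mem)
  rw [hF 0 (j + 1) (by omega) (by omega), hF 0 j hj₁ (by omega), add_sub_cancel_right,
    ghostExtend_of_mem hj]
  calc g (j + 1) 0 _ ≤ g (j + 1) 0 0 := (hg (j + 1)).antitoneOn_right unitInterval.zero_mem
        unitInterval.zero_mem (h₀ _) (h₀ _).1
    _ = g j 0 0 := by rw [hg₀, hg₀]
    _ ≤ g j _ 0 := (hg j).monotoneOn_left unitInterval.zero_mem unitInterval.zero_mem (h₀ _)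
        (h₀ _).1

theorem flux_one_le_succ_of_ghostExtend {C : ℝ} (hg : ∀ j, IsMonotoneLipschitzFlux L (g j))
    (hg₁ : ∀ j, g j 1 1 = C) (hub : ub ∈ I) (huB : uB ∈ I)
    (hF : ∀ v j, lo ≤ j → j ≤ hi + 1 →
      F v j = g j (ghostExtend lo hi ub uB v (j - 1)) (ghostExtend lo hi ub uB v j)) :
    ∀ j ∈ Finset.Icc lo hi, F 1 j ≤ F 1 (j + 1) := by
  intro j hj
  obtain ⟨hj₁, hj₂⟩ := Finset.mem_Icc.1 hj
  have h₁ := ghostExtend_mem (lo := lo) (hi := hi) hub huB (fun _ _ => unitInterval.one_mem)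
  rw [hF 1 (j + 1) (by omega) (by omega), hF 1 j hj₁ (by omega), add_sub_cancel_right,
    ghostExtend_of_mem hj]
  calc g j _ 1 ≤ g j 1 1 := (hg j).monotoneOn_left unitInterval.one_mem (h₁ _)
        unitInterval.one_mem (h₁ _).2
    _ = g (j + 1) 1 1 := by rw [hg₁, hg₁]
    _ ≤ g (j + 1) 1 _ := (hg (j + 1)).antitoneOn_right unitInterval.one_mem (h₁ _)
        unitInterval.one_mem (h₁ _).2

end GhostCells

/-- `schemeLHS … u n j` is by definition `stepResidual` with `u₀ = u n`, `u = u (n + 1)` and the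
flux of the boundary data at time `n + 1`. -/
def stepResidual (ϕ : ℤ → ℝ) (δx δt : ℝ) (F : (ℤ → ℝ) → ℤ → ℝ) (u₀ u : ℤ → ℝ) (j : ℤ) : ℝ :=
  ϕ j * (u j - u₀ j) * δx / δt + F u (j + 1) - F u j

section StepResidual

variable {lo hi : ℤ} {ϕ : ℤ → ℝ} {δx δt : ℝ} {F : (ℤ → ℝ) → ℤ → ℝ} {u₀ u : ℤ → ℝ}

lemma stepResidual_eq_zero_iff (hδt : δt ≠ 0) {j : ℤ} :
    stepResidual ϕ δx δt F u₀ u j = 0 ↔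
      ϕ j * u j * δx + (F u (j + 1) - F u j) * δt = ϕ j * u₀ j * δx := by
  have h : stepResidual ϕ δx δt F u₀ u j * δt =
      ϕ j * u j * δx + (F u (j + 1) - F u j) * δt - ϕ j * u₀ j * δx := by
    unfold stepResidual; field_simp; ring
  rw [← sub_eq_zero (a := ϕ j * u j * δx + _), ← h, mul_eq_zero, or_iff_left hδt]

lemma cell_le_of_stepResidual_eq_zero (hF : IsMonotoneFlux lo hi F) (hδt : 0 < δt) {m : ℤ → ℝ}
    (hu : IsUnitOn lo hi u) (hm : IsUnitOn lo hi m) (hum : ∀ k ∈ Finset.Icc lo hi, u k ≤ m k)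
    {j : ℤ} (hj : j ∈ Finset.Icc lo hi) (hmj : m j = u j)
    (hres : stepResidual ϕ δx δt F u₀ u j = 0) :
    ϕ j * m j * δx + (F m (j + 1) - F m j) * δt ≤ ϕ j * u₀ j * δx := by
  obtain ⟨hj₁, hj₂⟩ := Finset.mem_Icc.1 hj
  have hr : F m (j + 1) ≤ F u (j + 1) := hF m u hm hu (j + 1) (by omega) (by omega)
    (fun _ => by rw [add_sub_cancel_right, hmj]) (fun h => hum _ (Finset.mem_Icc.2 ⟨by omega, h⟩))
  have hl : F u j ≤ F m j := hF u m hu hm j hj₁ (by omega)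
    (fun h => hum _ (Finset.mem_Icc.2 ⟨by omega, by omega⟩)) (fun _ => hmj.le)
  rw [← (stepResidual_eq_zero_iff hδt.ne').1 hres, hmj]
  nlinarith

theorem sum_posPart_le_of_stepResidual_eq_zero (hlohi : lo ≤ hi + 1)
    (hF : IsMonotoneFlux lo hi F) (hϕ : ∀ j, 0 ≤ ϕ j) (hδx : 0 ≤ δx) (hδt : 0 < δt)
    {u₀' u' : ℤ → ℝ} (hu : IsUnitOn lo hi u) (hu' : IsUnitOn lo hi u')
    (hres : ∀ j ∈ Finset.Icc lo hi, stepResidual ϕ δx δt F u₀ u j = 0)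
    (hres' : ∀ j ∈ Finset.Icc lo hi, stepResidual ϕ δx δt F u₀' u' j = 0) :
    ∑ j ∈ Finset.Icc lo hi, ϕ j * max (u' j - u j) 0 * δx ≤
      ∑ j ∈ Finset.Icc lo hi, ϕ j * max (u₀' j - u₀ j) 0 * δx := by
  set m : ℤ → ℝ := fun k => max (u k) (u' k)
  have hm : IsUnitOn lo hi m := fun k hk =>
    ⟨(hu k hk).1.trans (le_max_left _ _), max_le (hu k hk).2 (hu' k hk).2⟩
  have hcell : ∀ j ∈ Finset.Icc lo hi,
      ϕ j * (m j - u j) * δx + ((F m (j + 1) - F u (j + 1)) - (F m j - F u j)) * δt ≤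
        ϕ j * max (u₀' j - u₀ j) 0 * δx := by
    intro j hj
    have hsol := (stepResidual_eq_zero_iff hδt.ne').1 (hres j hj)
    have hϕx : 0 ≤ ϕ j * δx := mul_nonneg (hϕ j) hδx
    rcases le_total (u' j) (u j) with h | h
    · have := cell_le_of_stepResidual_eq_zero hF hδt hu hm (fun k _ => le_max_left _ _) hj
        (max_eq_left h) (hres j hj)
      nlinarith [le_max_right (u₀' j - u₀ j) 0]
    · have := cell_le_of_stepResidual_eq_zero hF hδt hu' hm (fun k _ => le_max_right _ _) hj
        (max_eq_right h) (hres' j hj)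
      nlinarith [le_max_left (u₀' j - u₀ j) 0]
  have hr : F u (hi + 1) ≤ F m (hi + 1) := hF u m hu hm (hi + 1) hlohi le_rfl
    (fun _ => le_max_left _ _) (fun h => absurd h (by omega))
  have hl : F m lo ≤ F u lo := hF m u hm hu lo le_rfl hlohi (fun h => absurd h (lt_irrefl _))
    (fun _ => le_max_left _ _)
  have hsum := Finset.sum_le_sum hcell
  rw [Finset.sum_add_distrib, ← Finset.sum_mul, ← Finset.sum_mul,
    sum_Icc_succ_sub (fun k => F m k - F u k) hlohi] at hsum
  have hbdry : 0 ≤ (F m (hi + 1) - F u (hi + 1) - (F m lo - F u lo)) * δt :=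
    mul_nonneg (by linarith) hδt.le
  have hpos : ∀ j, max (u' j - u j) 0 = m j - u j := fun j => by
    rw [← max_sub_sub_right, sub_self, max_comm]
  simp only [hpos]
  rw [← Finset.sum_mul]
  linarith

end StepResidual

lemma eq_zero_of_projIcc_sub_div_eq {x r Λ : ℝ} (hΛ : 0 < Λ)
    (h : (projIcc 0 1 zero_le_one (x - r / Λ) : ℝ) = x) (h₀ : x = 0 → r ≤ 0)
    (h₁ : x = 1 → 0 ≤ r) : r = 0 := by
  rw [coe_projIcc] at h
  rcases le_total (x - r / Λ) 0 with hle | hle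
  · rw [min_eq_right (hle.trans zero_le_one), max_eq_left hle] at h
    subst h
    have : 0 * Λ ≤ r := (le_div_iff₀ hΛ).1 (by linarith)
    linarith [h₀ rfl]
  rcases le_total 1 (x - r / Λ) with hge | hge
  · rw [min_eq_left hge, max_eq_right zero_le_one] at h
    subst h
    have : r ≤ 0 * Λ := (div_le_iff₀ hΛ).1 (by linarith)
    linarith [h₁ rfl]
  · rw [min_eq_right hge, max_eq_right hle, sub_eq_self, div_eq_zero_iff] at h
    exact h.resolve_right hΛ.ne'

section Existence

variable {lo hi : ℤ} {L : ℝ≥0} {ϕ : ℤ → ℝ} {δx δt : ℝ} {F : (ℤ → ℝ) → ℤ → ℝ} {u₀ : ℤ → ℝ}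

lemma stepResidual_le_of_le (hF : IsMonotoneFlux lo hi F) {v v' : ℤ → ℝ}
    (hv : IsUnitOn lo hi v) (hv' : IsUnitOn lo hi v') (hvv : ∀ k ∈ Finset.Icc lo hi, v k ≤ v' k)
    {j : ℤ} (hj : j ∈ Finset.Icc lo hi) (hjj : v j = v' j) :
    stepResidual ϕ δx δt F u₀ v' j ≤ stepResidual ϕ δx δt F u₀ v j := by
  obtain ⟨hj₁, hj₂⟩ := Finset.mem_Icc.1 hj
  have hr : F v' (j + 1) ≤ F v (j + 1) := hF v' v hv' hv (j + 1) (by omega) (by omega)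
    (fun _ => by rw [add_sub_cancel_right, hjj]) (fun h => hvv _ (Finset.mem_Icc.2 ⟨by omega, h⟩))
  have hl : F v j ≤ F v' j := hF v v' hv hv' j hj₁ (by omega)
    (fun h => hvv _ (Finset.mem_Icc.2 ⟨by omega, by omega⟩)) (fun _ => hjj.ge)
  unfold stepResidual
  rw [hjj]
  linarith

lemma stepResidual_update_le (hL : IsLipschitzFlux lo hi L F) {v : ℤ → ℝ}
    (hv : IsUnitOn lo hi v) {j : ℤ} (hj : j ∈ Finset.Icc lo hi) {s s' : ℝ} (hs : s ∈ I)
    (hs' : s' ∈ I) (hss : s ≤ s') :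
    stepResidual ϕ δx δt F u₀ (Function.update v j s') j ≤
      stepResidual ϕ δx δt F u₀ (Function.update v j s) j + (ϕ j * δx / δt + 2 * L) * (s' - s) := by
  obtain ⟨h₁, h₂⟩ := hL v hv j hj s hs s' hs' hss
  have e : ϕ j * (s' - u₀ j) * δx / δt = ϕ j * (s - u₀ j) * δx / δt + ϕ j * δx / δt * (s' - s) := by
    ring
  simp only [stepResidual, Function.update_self]
  linarith

lemma stepResidual_le_add_of_le (hF : IsMonotoneFlux lo hi F) (hL : IsLipschitzFlux lo hi L F)
    {v v' : ℤ → ℝ} (hv : IsUnitOn lo hi v) (hv' : IsUnitOn lo hi v')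
    (hvv : ∀ k ∈ Finset.Icc lo hi, v k ≤ v' k) {j : ℤ} (hj : j ∈ Finset.Icc lo hi) :
    stepResidual ϕ δx δt F u₀ v' j ≤
      stepResidual ϕ δx δt F u₀ v j + (ϕ j * δx / δt + 2 * L) * (v' j - v j) := by
  have hw := hv.update (j := j) (hv' j hj)
  calc stepResidual ϕ δx δt F u₀ v' j
      ≤ stepResidual ϕ δx δt F u₀ (Function.update v j (v' j)) j :=
        stepResidual_le_of_le hF hw hv' (fun k hk => by
          by_cases hkj : k = j
          · subst hkj; simp
          · simpa [hkj] using hvv k hk) hj (by simp)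
    _ ≤ _ := by
      simpa using stepResidual_update_le hL hv hj (hv j hj) (hv' j hj) (hvv j hj)

lemma stepResidual_nonpos_of_eq_zero (hF : IsMonotoneFlux lo hi F) (hϕ : ∀ j, 0 ≤ ϕ j)
    (hδx : 0 ≤ δx) (hδt : 0 ≤ δt) (h₀ : ∀ j ∈ Finset.Icc lo hi, F 0 (j + 1) ≤ F 0 j)
    (hu₀ : IsUnitOn lo hi u₀) {v : ℤ → ℝ} (hv : IsUnitOn lo hi v) {j : ℤ}
    (hj : j ∈ Finset.Icc lo hi) (hvj : v j = 0) : stepResidual ϕ δx δt F u₀ v j ≤ 0 := by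
  have hle := stepResidual_le_of_le (ϕ := ϕ) (δx := δx) (δt := δt) (u₀ := u₀) (v := 0) hF
    (fun _ _ => unitInterval.zero_mem) hv (fun k hk => (hv k hk).1) hj hvj.symm
  have : 0 ≤ ϕ j * u₀ j * δx / δt :=
    div_nonneg (mul_nonneg (mul_nonneg (hϕ j) (hu₀ j hj).1) hδx) hδt
  have e : stepResidual ϕ δx δt F u₀ 0 j = -(ϕ j * u₀ j * δx / δt) + (F 0 (j + 1) - F 0 j) := by
    simp only [stepResidual, Pi.zero_apply]; ring
  linarith [h₀ j hj]

lemma stepResidual_nonneg_of_eq_one (hF : IsMonotoneFlux lo hi F) (hϕ : ∀ j, 0 ≤ ϕ j)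
    (hδx : 0 ≤ δx) (hδt : 0 ≤ δt) (h₁ : ∀ j ∈ Finset.Icc lo hi, F 1 j ≤ F 1 (j + 1))
    (hu₀ : IsUnitOn lo hi u₀) {v : ℤ → ℝ} (hv : IsUnitOn lo hi v) {j : ℤ}
    (hj : j ∈ Finset.Icc lo hi) (hvj : v j = 1) : 0 ≤ stepResidual ϕ δx δt F u₀ v j := by
  have hle := stepResidual_le_of_le (ϕ := ϕ) (δx := δx) (δt := δt) (u₀ := u₀) (v' := 1) hF
    hv (fun _ _ => unitInterval.one_mem) (fun k hk => (hv k hk).2) hj hvj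
  have : 0 ≤ ϕ j * (1 - u₀ j) * δx / δt :=
    div_nonneg (mul_nonneg (mul_nonneg (hϕ j) (sub_nonneg.2 (hu₀ j hj).2)) hδx) hδt
  have e : stepResidual ϕ δx δt F u₀ 1 j = ϕ j * (1 - u₀ j) * δx / δt + (F 1 (j + 1) - F 1 j) := by
    simp only [stepResidual, Pi.one_apply]; ring
  linarith [h₁ j hj]

end Existence

section Relaxation

variable {lo hi : ℤ} {Λ : ℤ → ℝ} {R : (ℤ → ℝ) → ℤ → ℝ}

def relaxation (lo hi : ℤ) (Λ : ℤ → ℝ) (R : (ℤ → ℝ) → ℤ → ℝ) (w : ℤ → I) (j : ℤ) : I :=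
  if j ∈ Finset.Icc lo hi then projIcc 0 1 zero_le_one (w j - R (fun k => w k) j / Λ j) else w j

lemma monotone_relaxation (hΛ : ∀ j, 0 < Λ j)
    (hR : ∀ w w' : ℤ → I, w ≤ w' → ∀ j ∈ Finset.Icc lo hi,
      R (fun k => w' k) j ≤ R (fun k => w k) j + Λ j * (w' j - w j)) :
    Monotone (relaxation lo hi Λ R) := by
  intro w w' hww j
  unfold relaxation
  split_ifs with hj
  · refine monotone_projIcc _ ?_
    have h := hR w w' hww j hj
    have : R (fun k => w' k) j / Λ j ≤ R (fun k => w k) j / Λ j + (w' j - w j) := by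
      rw [div_add' _ _ _ (hΛ j).ne', div_le_div_iff_of_pos_right (hΛ j)]
      linarith
    linarith
  · exact hww j

lemma eq_zero_of_relaxation_eq (hΛ : ∀ j, 0 < Λ j) {w : ℤ → I} (hw : relaxation lo hi Λ R w = w)
    {j : ℤ} (hj : j ∈ Finset.Icc lo hi) (h₀ : (w j : ℝ) = 0 → R (fun k => w k) j ≤ 0)
    (h₁ : (w j : ℝ) = 1 → 0 ≤ R (fun k => w k) j) : R (fun k => w k) j = 0 := by
  have hwj := congrArg Subtype.val (congrFun hw j)
  simp only [relaxation, if_pos hj] at hwj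
  exact eq_zero_of_projIcc_sub_div_eq (hΛ j) hwj h₀ h₁

end Relaxation

theorem exists_stepResidual_eq_zero {lo hi : ℤ} {L : ℝ≥0} {ϕ : ℤ → ℝ} {δx δt : ℝ}
    {F : (ℤ → ℝ) → ℤ → ℝ} {u₀ : ℤ → ℝ} (hF : IsMonotoneFlux lo hi F)
    (hL : IsLipschitzFlux lo hi L F) (hϕ : ∀ j, 0 < ϕ j) (hδx : 0 < δx) (hδt : 0 < δt)
    (h₀ : ∀ j ∈ Finset.Icc lo hi, F 0 (j + 1) ≤ F 0 j)
    (h₁ : ∀ j ∈ Finset.Icc lo hi, F 1 j ≤ F 1 (j + 1)) (hu₀ : IsUnitOn lo hi u₀) :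
    ∃ u, IsUnitOn lo hi u ∧ ∀ j ∈ Finset.Icc lo hi, stepResidual ϕ δx δt F u₀ u j = 0 := by
  -- `Λ j` dominates the growth of the residual of cell `j` in `u j`: the relaxation is monotone.
  set Λ : ℤ → ℝ := fun j => ϕ j * δx / δt + 2 * L
  have hΛ : ∀ j, 0 < Λ j := fun j =>
    add_pos_of_pos_of_nonneg (div_pos (mul_pos (hϕ j) hδx) hδt) (by positivity)
  have hunit : ∀ w : ℤ → I, IsUnitOn lo hi (fun k => w k) := fun w k _ => (w k).2
  let T : (ℤ → I) →o (ℤ → I) := ⟨relaxation lo hi Λ (stepResidual ϕ δx δt F u₀),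
    monotone_relaxation hΛ fun w w' hww j hj =>
      stepResidual_le_add_of_le hF hL (hunit w) (hunit w') (fun k _ => hww k) hj⟩
  refine ⟨fun k => OrderHom.lfp T k, hunit _, fun j hj => ?_⟩
  exact eq_zero_of_relaxation_eq hΛ (OrderHom.map_lfp T) hj
    (stepResidual_nonpos_of_eq_zero hF (fun j => (hϕ j).le) hδx.le hδt.le h₀ hu₀ (hunit _) hj)
    (stepResidual_nonneg_of_eq_one hF (fun j => (hϕ j).le) hδx.le hδt.le h₁ hu₀ (hunit _) hj)

lemma exists_seq_of_forall_exists {α : Type*} {S : Set α} {P : ℕ → α → α → Prop} {M : ℕ}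
    {x₀ : α} (hx₀ : x₀ ∈ S) (hP : ∀ n < M, ∀ x ∈ S, ∃ y ∈ S, P n x y) :
    ∃ u : ℕ → α, u 0 = x₀ ∧ (∀ n ≤ M, u n ∈ S) ∧ ∀ n < M, P n (u n) (u (n + 1)) := by
  choose! next hnextS hnextP using hP
  let u : ℕ → α := fun n => Nat.rec x₀ (fun k x => next k x) n
  have hu : ∀ n ≤ M, u n ∈ S := by
    intro n
    induction n with
    | zero => exact fun _ => hx₀
    | succ n ih => exact fun hn => hnextS n (by omega) _ (ih (by omega))
  exact ⟨u, rfl, hu, fun n hn => hnextP n hn _ (hu n hn.le)⟩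

theorem sum_posPart_le_of_forall_stepResidual_eq_zero {lo hi : ℤ} {M : ℕ} {ϕ : ℤ → ℝ}
    {δx δt : ℝ} {F : ℕ → (ℤ → ℝ) → ℤ → ℝ} (hlohi : lo ≤ hi + 1)
    (hF : ∀ n < M, IsMonotoneFlux lo hi (F n)) (hϕ : ∀ j, 0 ≤ ϕ j) (hδx : 0 ≤ δx)
    (hδt : 0 < δt) {u v : ℕ → ℤ → ℝ} (hu : ∀ n ≤ M, IsUnitOn lo hi (u n))
    (hv : ∀ n ≤ M, IsUnitOn lo hi (v n))
    (hres : ∀ n < M, ∀ j ∈ Finset.Icc lo hi, stepResidual ϕ δx δt (F n) (u n) (u (n + 1)) j = 0)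
    (hres' : ∀ n < M, ∀ j ∈ Finset.Icc lo hi, stepResidual ϕ δx δt (F n) (v n) (v (n + 1)) j = 0) :
    ∀ n ≤ M, ∑ j ∈ Finset.Icc lo hi, ϕ j * max (v n j - u n j) 0 * δx ≤
      ∑ j ∈ Finset.Icc lo hi, ϕ j * max (v 0 j - u 0 j) 0 * δx := by
  intro n
  induction n with
  | zero => exact fun _ => le_rfl
  | succ n ih =>
    exact fun hn => (sum_posPart_le_of_stepResidual_eq_zero hlohi (hF n (by omega)) hϕ hδx hδt
      (hu (n + 1) hn) (hv (n + 1) hn) (hres n (by omega)) (hres' n (by omega))).trans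
      (ih (by omega))

lemma eqOn_of_sum_posPart_le {s : Finset ℤ} {ϕ x y x₀ y₀ : ℤ → ℝ} {δx : ℝ} (hϕ : ∀ j, 0 < ϕ j)
    (hδx : 0 < δx) (h₀ : ∀ j ∈ s, x₀ j = y₀ j)
    (hxy : ∑ j ∈ s, ϕ j * max (x j - y j) 0 * δx ≤ ∑ j ∈ s, ϕ j * max (x₀ j - y₀ j) 0 * δx)
    (hyx : ∑ j ∈ s, ϕ j * max (y j - x j) 0 * δx ≤ ∑ j ∈ s, ϕ j * max (y₀ j - x₀ j) 0 * δx) :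
    ∀ j ∈ s, x j = y j := by
  have hle : ∀ {x y x₀ y₀ : ℤ → ℝ}, (∀ j ∈ s, x₀ j = y₀ j) →
      ∑ j ∈ s, ϕ j * max (x j - y j) 0 * δx ≤ ∑ j ∈ s, ϕ j * max (x₀ j - y₀ j) 0 * δx →
      ∀ j ∈ s, x j ≤ y j := fun {x y x₀ y₀} h₀ h j hj => by
    have hterm : ∀ j ∈ s, 0 ≤ ϕ j * max (x j - y j) 0 * δx := fun j _ =>
      mul_nonneg (mul_nonneg (hϕ j).le (le_max_right _ _)) hδx.le
    have hzero : ∑ j ∈ s, ϕ j * max (x₀ j - y₀ j) 0 * δx = 0 :=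
      Finset.sum_eq_zero fun j hj => by simp [h₀ j hj]
    have := (Finset.sum_eq_zero_iff_of_nonneg hterm).1
      (le_antisymm (h.trans hzero.le) (Finset.sum_nonneg hterm)) j hj
    simpa [(hϕ j).ne', hδx.ne', sub_nonpos] using this
  exact fun j hj => le_antisymm (hle h₀ hxy j hj) (hle (fun j hj => (h₀ j hj).symm) hyx j hj)

lemma phiCoef_pos {ϕ₁ ϕ₂ : ℝ} (h₁ : 0 < ϕ₁) (h₂ : 0 < ϕ₂) (j : ℤ) : 0 < phiCoef ϕ₁ ϕ₂ j := by
  unfold phiCoef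
  split_ifs
  exacts [h₁, h₂]

section NumFlux

variable {G₁ G₂ : ℝ → ℝ → ℝ} {φ₁ φ₂ : ℝ → ℝ} {c : ℝ → ℝ → ℝ} {δx : ℝ} {N : ℤ} {L : ℝ≥0}
  {ub uB : ℝ}

theorem isMonotoneFlux_numFlux (hN : 0 < N)
    (hL : ∀ j, IsMonotoneLipschitzFlux L (edgeFlux G₁ G₂ φ₁ φ₂ c δx N j)) (hub : ub ∈ I)
    (huB : uB ∈ I) : IsMonotoneFlux (-N) (N - 1) (numFlux G₁ G₂ φ₁ φ₂ c δx N ub uB) :=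
  isMonotoneFlux_of_ghostExtend hL hub huB fun v _ hj hj' =>
    numFlux_eq_edgeFlux hN ub uB v hj (by omega)

theorem exists_stepResidual_numFlux_eq_zero {ϕ : ℤ → ℝ} {δt C₀ C₁ : ℝ} {u₀ : ℤ → ℝ} (hN : 0 < N)
    (hL : ∀ j, IsMonotoneLipschitzFlux L (edgeFlux G₁ G₂ φ₁ φ₂ c δx N j))
    (h₀ : ∀ j, edgeFlux G₁ G₂ φ₁ φ₂ c δx N j 0 0 = C₀)
    (h₁ : ∀ j, edgeFlux G₁ G₂ φ₁ φ₂ c δx N j 1 1 = C₁) (hub : ub ∈ I) (huB : uB ∈ I)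
    (hϕ : ∀ j, 0 < ϕ j) (hδx : 0 < δx) (hδt : 0 < δt) (hu₀ : IsUnitOn (-N) (N - 1) u₀) :
    ∃ u, IsUnitOn (-N) (N - 1) u ∧ ∀ j ∈ Finset.Icc (-N) (N - 1),
      stepResidual ϕ δx δt (numFlux G₁ G₂ φ₁ φ₂ c δx N ub uB) u₀ u j = 0 := by
  have hF : ∀ v j, -N ≤ j → j ≤ N - 1 + 1 → numFlux G₁ G₂ φ₁ φ₂ c δx N ub uB v j =
      edgeFlux G₁ G₂ φ₁ φ₂ c δx N j (ghostExtend (-N) (N - 1) ub uB v (j - 1))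
        (ghostExtend (-N) (N - 1) ub uB v j) :=
    fun v _ hj hj' => numFlux_eq_edgeFlux hN ub uB v hj (by omega)
  exact exists_stepResidual_eq_zero (isMonotoneFlux_of_ghostExtend hL hub huB hF)
    (isLipschitzFlux_of_ghostExtend hL hub huB hF) hϕ hδx hδt
    (flux_zero_succ_le_of_ghostExtend hL h₀ hub huB hF)
    (flux_one_le_succ_of_ghostExtend hL h₁ hub huB hF) hu₀

end NumFlux

theorem stmt4_general
    (T : ℝ) (hT : 0 < T) (N M : ℕ) (hN : 0 < N) (hM : 0 < M)
    (δx δt : ℝ) (hδxdef : δx = 1 / (N : ℝ)) (hδtdef : δt = T / (M : ℝ))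
    (ϕ₁ ϕ₂ : ℝ) (hϕ₁ : ϕ₁ ∈ Ioo (0:ℝ) 1) (hϕ₂ : ϕ₂ ∈ Ioo (0:ℝ) 1)
    (π₁ π₂ φ₁ φ₂ : ℝ → ℝ) (G₁ G₂ : ℝ → ℝ → ℝ)
    (hπ₁mono : StrictMonoOn π₁ (Icc 0 1))
    (hπ₂mono : StrictMonoOn π₂ (Icc 0 1))
    (hφ₁mono : StrictMonoOn φ₁ (Icc 0 1)) (hφ₁lip : ∃ K, LipschitzOnWith K φ₁ (Icc 0 1))
    (hφ₂mono : StrictMonoOn φ₂ (Icc 0 1)) (hφ₂lip : ∃ K, LipschitzOnWith K φ₂ (Icc 0 1))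
    (hG₁lip : ∃ K, LipschitzOnWith K (fun p : ℝ × ℝ => G₁ p.1 p.2) (Icc 0 1 ×ˢ Icc 0 1))
    (hG₁mono : ∀ b ∈ Icc (0:ℝ) 1, MonotoneOn (fun a => G₁ a b) (Icc 0 1))
    (hG₁anti : ∀ a ∈ Icc (0:ℝ) 1, AntitoneOn (fun b => G₁ a b) (Icc 0 1))
    (hG₂lip : ∃ K, LipschitzOnWith K (fun p : ℝ × ℝ => G₂ p.1 p.2) (Icc 0 1 ×ˢ Icc 0 1))
    (hG₂mono : ∀ b ∈ Icc (0:ℝ) 1, MonotoneOn (fun a => G₂ a b) (Icc 0 1))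
    (hG₂anti : ∀ a ∈ Icc (0:ℝ) 1, AntitoneOn (fun b => G₂ a b) (Icc 0 1))
    (c d : ℝ → ℝ → ℝ)
    (hcd : ∀ a ∈ Icc (0:ℝ) 1, ∀ b ∈ Icc (0:ℝ) 1,
      (c a b ∈ Icc (0:ℝ) 1 ∧ d a b ∈ Icc (0:ℝ) 1 ∧
        G₁ a (c a b) - 2 * (φ₁ (c a b) - φ₁ a) / δx
          = G₂ (d a b) b - 2 * (φ₂ b - φ₂ (d a b)) / δx ∧
        Connects π₁ π₂ (c a b) (d a b)) ∧
      ∀ c' d' : ℝ, c' ∈ Icc (0:ℝ) 1 → d' ∈ Icc (0:ℝ) 1 →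
        G₁ a c' - 2 * (φ₁ c' - φ₁ a) / δx = G₂ d' b - 2 * (φ₂ b - φ₂ d') / δx →
        Connects π₁ π₂ c' d' → c' = c a b ∧ d' = d a b)
    (ubar ubbar : ℕ → ℝ)
    (hubar : ∀ n, 1 ≤ n → n ≤ M → ubar n ∈ Icc (0:ℝ) 1)
    (hubbar : ∀ n, 1 ≤ n → n ≤ M → ubbar n ∈ Icc (0:ℝ) 1)
    (f₁ f₂ : ℝ → ℝ) (q : ℝ)
    (hG₁diag : ∀ s ∈ Icc (0:ℝ) 1, G₁ s s = f₁ s)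
    (hG₂diag : ∀ s ∈ Icc (0:ℝ) 1, G₂ s s = f₂ s)
    (hf₁0 : f₁ 0 = 0) (hf₂0 : f₂ 0 = 0) (hf₁1 : f₁ 1 = q) (hf₂1 : f₂ 1 = q)
    (u0 v0 : ℤ → ℝ)
    (hu0 : ∀ j ∈ Finset.Icc (-(N : ℤ)) ((N : ℤ) - 1), u0 j ∈ Set.Icc (0:ℝ) 1)
 :
    (∃ u : ℕ → ℤ → ℝ,
      IsDiscreteSolution G₁ G₂ φ₁ φ₂ c ϕ₁ ϕ₂ δx δt (N : ℤ) M ubar ubbar u ∧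
      ∀ j ∈ Finset.Icc (-(N : ℤ)) ((N : ℤ) - 1), u 0 j = u0 j) ∧
    (∀ u u' : ℕ → ℤ → ℝ,
      IsDiscreteSolution G₁ G₂ φ₁ φ₂ c ϕ₁ ϕ₂ δx δt (N : ℤ) M ubar ubbar u →
      (∀ j ∈ Finset.Icc (-(N : ℤ)) ((N : ℤ) - 1), u 0 j = u0 j) →
      IsDiscreteSolution G₁ G₂ φ₁ φ₂ c ϕ₁ ϕ₂ δx δt (N : ℤ) M ubar ubbar u' →
      (∀ j ∈ Finset.Icc (-(N : ℤ)) ((N : ℤ) - 1), u' 0 j = u0 j) →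
      ∀ n ≤ M, ∀ j ∈ Finset.Icc (-(N : ℤ)) ((N : ℤ) - 1), u n j = u' n j) ∧
    (∀ u v : ℕ → ℤ → ℝ,
      IsDiscreteSolution G₁ G₂ φ₁ φ₂ c ϕ₁ ϕ₂ δx δt (N : ℤ) M ubar ubbar u →
      (∀ j ∈ Finset.Icc (-(N : ℤ)) ((N : ℤ) - 1), u 0 j = u0 j) →
      IsDiscreteSolution G₁ G₂ φ₁ φ₂ c ϕ₁ ϕ₂ δx δt (N : ℤ) M ubar ubbar v →
      (∀ j ∈ Finset.Icc (-(N : ℤ)) ((N : ℤ) - 1), v 0 j = v0 j) →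
      ∀ n ≤ M,
        (∑ j ∈ Finset.Icc (-(N : ℤ)) ((N : ℤ) - 1),
            phiCoef ϕ₁ ϕ₂ j * max (u n j - v n j) 0 * δx
          ≤ ∑ j ∈ Finset.Icc (-(N : ℤ)) ((N : ℤ) - 1),
              phiCoef ϕ₁ ϕ₂ j * max (u0 j - v0 j) 0 * δx) ∧
        (∑ j ∈ Finset.Icc (-(N : ℤ)) ((N : ℤ) - 1),
            phiCoef ϕ₁ ϕ₂ j * max (-(u n j - v n j)) 0 * δx
          ≤ ∑ j ∈ Finset.Icc (-(N : ℤ)) ((N : ℤ) - 1),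
              phiCoef ϕ₁ ϕ₂ j * max (-(u0 j - v0 j)) 0 * δx)) := by
  have hNpos : (0 : ℤ) < N := by exact_mod_cast hN
  have hδx : 0 < δx := by rw [hδxdef]; positivity
  have hδt : 0 < δt := by rw [hδtdef]; positivity
  have hϕ := phiCoef_pos hϕ₁.1 hϕ₂.1
  obtain ⟨L, hL⟩ := exists_isMonotoneLipschitzFlux_edgeFlux hδx hπ₁mono hπ₂mono hφ₁mono hφ₁lip
    hφ₂mono hφ₂lip hG₁lip hG₁mono hG₁anti hG₂lip hG₂mono hG₂anti
    (fun a ha b hb => (hcd a ha b hb).1) N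
  have h₀ := unitInterval.zero_mem
  have h₁ := unitInterval.one_mem
  have hdiag₀ := edgeFlux_self h₀ (by rw [hG₁diag 0 h₀, hG₂diag 0 h₀, hf₁0, hf₂0])
    (connects_zero_zero π₁ π₂) (hcd 0 h₀ 0 h₀).2 N
  have hdiag₁ := edgeFlux_self h₁ (by rw [hG₁diag 1 h₁, hG₂diag 1 h₁, hf₁1, hf₂1])
    (connects_one_one π₁ π₂) (hcd 1 h₁ 1 h₁).2 N
  have hbd : ∀ n < M, ubar (n + 1) ∈ I ∧ ubbar (n + 1) ∈ I := fun n hn =>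
    ⟨hubar _ (by omega) (by omega), hubbar _ (by omega) (by omega)⟩
  have hcontr := fun u v (hu : IsDiscreteSolution G₁ G₂ φ₁ φ₂ c ϕ₁ ϕ₂ δx δt N M ubar ubbar u)
      (hv : IsDiscreteSolution G₁ G₂ φ₁ φ₂ c ϕ₁ ϕ₂ δx δt N M ubar ubbar v) =>
    sum_posPart_le_of_forall_stepResidual_eq_zero (by omega)
      (fun n hn => isMonotoneFlux_numFlux hNpos hL (hbd n hn).1 (hbd n hn).2)
      (fun j => (hϕ j).le) hδx.le hδt hu.1 hv.1 hu.2 hv.2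
  refine ⟨?_, fun u u' hu hu0 hu' hu0' n hn => ?_, fun u v hu hu0 hv hv0 n hn => ?_⟩
  · obtain ⟨u, hu0', hu, hres⟩ := exists_seq_of_forall_exists (S := {v | IsUnitOn (-N) (N - 1) v})
      hu0 fun n hn w hw => exists_stepResidual_numFlux_eq_zero hNpos hL hdiag₀ hdiag₁
        (hbd n hn).1 (hbd n hn).2 hϕ hδx hδt hw
    exact ⟨u, ⟨hu, hres⟩, fun j _ => by rw [hu0']⟩
  · exact eqOn_of_sum_posPart_le hϕ hδx (fun j hj => by rw [hu0 j hj, hu0' j hj])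
      (hcontr u' u hu' hu n hn) (hcontr u u' hu hu' n hn)
  · simp only [neg_sub]
    refine ⟨(hcontr v u hv hu n hn).trans_eq ?_, (hcontr u v hu hv n hn).trans_eq ?_⟩ <;>
      exact Finset.sum_congr rfl fun j hj => by rw [hu0 j hj, hv0 j hj]

/-- Existence and uniqueness of the discrete solution, together with the discrete
`L¹`-contraction principle between discrete solutions. -/
theorem stmt4
    (T : ℝ) (hT : 0 < T) (N M : ℕ) (hN : 0 < N) (hM : 0 < M)
    (δx δt : ℝ) (hδxdef : δx = 1 / (N : ℝ)) (hδtdef : δt = T / (M : ℝ))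
    (ϕ₁ ϕ₂ : ℝ) (hϕ₁ : ϕ₁ ∈ Ioo (0:ℝ) 1) (hϕ₂ : ϕ₂ ∈ Ioo (0:ℝ) 1)
    (π₁ π₂ φ₁ φ₂ : ℝ → ℝ) (G₁ G₂ : ℝ → ℝ → ℝ)
    (hπ₁mono : StrictMonoOn π₁ (Icc 0 1)) (hπ₁lip : ∃ K, LipschitzOnWith K π₁ (Icc 0 1))
    (hπ₂mono : StrictMonoOn π₂ (Icc 0 1)) (hπ₂lip : ∃ K, LipschitzOnWith K π₂ (Icc 0 1))
    (hφ₁mono : StrictMonoOn φ₁ (Icc 0 1)) (hφ₁lip : ∃ K, LipschitzOnWith K φ₁ (Icc 0 1))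
    (hφ₁zero : φ₁ 0 = 0)
    (hφ₂mono : StrictMonoOn φ₂ (Icc 0 1)) (hφ₂lip : ∃ K, LipschitzOnWith K φ₂ (Icc 0 1))
    (hφ₂zero : φ₂ 0 = 0)
    (hG₁lip : ∃ K, LipschitzOnWith K (fun p : ℝ × ℝ => G₁ p.1 p.2) (Icc 0 1 ×ˢ Icc 0 1))
    (hG₁mono : ∀ b ∈ Icc (0:ℝ) 1, MonotoneOn (fun a => G₁ a b) (Icc 0 1))
    (hG₁anti : ∀ a ∈ Icc (0:ℝ) 1, AntitoneOn (fun b => G₁ a b) (Icc 0 1))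
    (hG₂lip : ∃ K, LipschitzOnWith K (fun p : ℝ × ℝ => G₂ p.1 p.2) (Icc 0 1 ×ˢ Icc 0 1))
    (hG₂mono : ∀ b ∈ Icc (0:ℝ) 1, MonotoneOn (fun a => G₂ a b) (Icc 0 1))
    (hG₂anti : ∀ a ∈ Icc (0:ℝ) 1, AntitoneOn (fun b => G₂ a b) (Icc 0 1))
    (c d : ℝ → ℝ → ℝ)
    (hcd : ∀ a ∈ Icc (0:ℝ) 1, ∀ b ∈ Icc (0:ℝ) 1,
      (c a b ∈ Icc (0:ℝ) 1 ∧ d a b ∈ Icc (0:ℝ) 1 ∧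
        G₁ a (c a b) - 2 * (φ₁ (c a b) - φ₁ a) / δx
          = G₂ (d a b) b - 2 * (φ₂ b - φ₂ (d a b)) / δx ∧
        Connects π₁ π₂ (c a b) (d a b)) ∧
      ∀ c' d' : ℝ, c' ∈ Icc (0:ℝ) 1 → d' ∈ Icc (0:ℝ) 1 →
        G₁ a c' - 2 * (φ₁ c' - φ₁ a) / δx = G₂ d' b - 2 * (φ₂ b - φ₂ d') / δx →
        Connects π₁ π₂ c' d' → c' = c a b ∧ d' = d a b)
    (ubar ubbar : ℕ → ℝ)
    (hubar : ∀ n, 1 ≤ n → n ≤ M → ubar n ∈ Icc (0:ℝ) 1)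
    (hubbar : ∀ n, 1 ≤ n → n ≤ M → ubbar n ∈ Icc (0:ℝ) 1)
    (f₁ f₂ : ℝ → ℝ) (q : ℝ)
    (hf₁lip : ∃ K, LipschitzOnWith K f₁ (Icc 0 1))
    (hf₂lip : ∃ K, LipschitzOnWith K f₂ (Icc 0 1))
    (hG₁diag : ∀ s ∈ Icc (0:ℝ) 1, G₁ s s = f₁ s)
    (hG₂diag : ∀ s ∈ Icc (0:ℝ) 1, G₂ s s = f₂ s)
    (hf₁0 : f₁ 0 = 0) (hf₂0 : f₂ 0 = 0) (hf₁1 : f₁ 1 = q) (hf₂1 : f₂ 1 = q)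
    (u0 v0 : ℤ → ℝ)
    (hu0 : ∀ j ∈ Finset.Icc (-(N : ℤ)) ((N : ℤ) - 1), u0 j ∈ Set.Icc (0:ℝ) 1)
    (hv0 : ∀ j ∈ Finset.Icc (-(N : ℤ)) ((N : ℤ) - 1), v0 j ∈ Set.Icc (0:ℝ) 1) :
    (∃ u : ℕ → ℤ → ℝ,
      IsDiscreteSolution G₁ G₂ φ₁ φ₂ c ϕ₁ ϕ₂ δx δt (N : ℤ) M ubar ubbar u ∧
      ∀ j ∈ Finset.Icc (-(N : ℤ)) ((N : ℤ) - 1), u 0 j = u0 j) ∧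
    (∀ u u' : ℕ → ℤ → ℝ,
      IsDiscreteSolution G₁ G₂ φ₁ φ₂ c ϕ₁ ϕ₂ δx δt (N : ℤ) M ubar ubbar u →
      (∀ j ∈ Finset.Icc (-(N : ℤ)) ((N : ℤ) - 1), u 0 j = u0 j) →
      IsDiscreteSolution G₁ G₂ φ₁ φ₂ c ϕ₁ ϕ₂ δx δt (N : ℤ) M ubar ubbar u' →
      (∀ j ∈ Finset.Icc (-(N : ℤ)) ((N : ℤ) - 1), u' 0 j = u0 j) →
      ∀ n ≤ M, ∀ j ∈ Finset.Icc (-(N : ℤ)) ((N : ℤ) - 1), u n j = u' n j) ∧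
    (∀ u v : ℕ → ℤ → ℝ,
      IsDiscreteSolution G₁ G₂ φ₁ φ₂ c ϕ₁ ϕ₂ δx δt (N : ℤ) M ubar ubbar u →
      (∀ j ∈ Finset.Icc (-(N : ℤ)) ((N : ℤ) - 1), u 0 j = u0 j) →
      IsDiscreteSolution G₁ G₂ φ₁ φ₂ c ϕ₁ ϕ₂ δx δt (N : ℤ) M ubar ubbar v →
      (∀ j ∈ Finset.Icc (-(N : ℤ)) ((N : ℤ) - 1), v 0 j = v0 j) →
      ∀ n ≤ M,
        (∑ j ∈ Finset.Icc (-(N : ℤ)) ((N : ℤ) - 1),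
            phiCoef ϕ₁ ϕ₂ j * max (u n j - v n j) 0 * δx
          ≤ ∑ j ∈ Finset.Icc (-(N : ℤ)) ((N : ℤ) - 1),
              phiCoef ϕ₁ ϕ₂ j * max (u0 j - v0 j) 0 * δx) ∧
        (∑ j ∈ Finset.Icc (-(N : ℤ)) ((N : ℤ) - 1),
            phiCoef ϕ₁ ϕ₂ j * max (-(u n j - v n j)) 0 * δx
          ≤ ∑ j ∈ Finset.Icc (-(N : ℤ)) ((N : ℤ) - 1),
              phiCoef ϕ₁ ϕ₂ j * max (-(u0 j - v0 j)) 0 * δx)) :=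
  stmt4_general T hT N M hN hM δx δt hδxdef hδtdef ϕ₁ ϕ₂ hϕ₁ hϕ₂ π₁ π₂ φ₁ φ₂ G₁ G₂ hπ₁mono hπ₂mono
    hφ₁mono hφ₁lip hφ₂mono hφ₂lip hG₁lip hG₁mono hG₁anti hG₂lip hG₂mono hG₂anti c d hcd ubar ubbar
    hubar hubbar f₁ f₂ q hG₁diag hG₂diag hf₁0 hf₂0 hf₁1 hf₂1 u0 v0 hu0
end
end
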